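/- arXiv:1711.04363 — 9 statements merged into one kernel-verified Lean document; each statement's English description precedes it below -/
import Mathlib

section
/- Let S be a total dominating set of a graph G without isolated vertices, let H be the subgraph of G consisting of the components of G[S] of order at least 3, and let X be the set of stems of H (vertices of H adjacent to a leaf of H). Then S is a minimal total dominating set if and only if EPN(s,S) ≠ ∅ for each s ∈ V(H) − X, where EPN(s,S) is the set of vertices outside S adjacent to s but to no other vertex of S. -/
open Finset

variable {V : Type*} [Fintype V] [DecidableEq V]

def IsTDS (G : SimpleGraph V) (S : Finset V) : Prop :=
  ∀ v : V, ∃ s ∈ S, G.Adj v s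

def IsMTDS (G : SimpleGraph V) (S : Finset V) : Prop :=
  IsTDS G S ∧ ∀ T : Finset V, T ⊂ S → ¬ IsTDS G T

lemma mtds_iff_pn (G : SimpleGraph V) (S : Finset V) (hS : IsTDS G S) :
    IsMTDS G S ↔ ∀ s ∈ S, ∃ v, G.Adj v s ∧ ∀ t ∈ S, G.Adj v t → t = s := by
  constructor
  · rintro ⟨-, hmin⟩ s hs
    have hsub : S.erase s ⊂ S := Finset.erase_ssubset hs
    have hne := hmin _ hsub
    rw [IsTDS] at hne
    push_neg at hne
    obtain ⟨v, hv⟩ := hne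
    obtain ⟨t, ht, hadj⟩ := hS v
    have hts : t = s := by
      by_contra h
      exact hv t (Finset.mem_erase.mpr ⟨h, ht⟩) hadj
    subst hts
    refine ⟨v, hadj, fun u hu hadj' => ?_⟩
    by_contra h
    exact hv u (Finset.mem_erase.mpr ⟨h, hu⟩) hadj'
  · intro h
    refine ⟨hS, fun T hT hTtds => ?_⟩
    obtain ⟨s, hsS, hsT⟩ := Finset.exists_of_ssubset hT
    obtain ⟨v, hadj, hpriv⟩ := h s hsS
    obtain ⟨t, htT, hadj'⟩ := hTtds v
    have := hpriv t (hT.1 htT) hadj'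
    subst this
    exact hsT htT

theorem stmt_1 (G : SimpleGraph V) (hG : ∀ v : V, ∃ u, G.Adj v u)
    (S : Finset V) (hS : IsTDS G S)
    (H : Set V)
    (hH : H = {v : V | ∃ hv : v ∈ (↑S : Set V),
      3 ≤ Set.ncard {u : (↑S : Set V) |
        (SimpleGraph.induce (↑S : Set V) G).Reachable ⟨v, hv⟩ u}})
    (leafH : V → Prop)
    (hleaf : ∀ u, leafH u ↔ u ∈ H ∧ Set.ncard {w : V | w ∈ S ∧ G.Adj u w} = 1)
    (X : Set V)
    (hX : X = {x ∈ H | ∃ u, leafH u ∧ G.Adj u x}) :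
    IsMTDS G S ↔ ∀ s ∈ H, s ∉ X →
      ∃ v, v ∉ S ∧ G.Adj v s ∧ ∀ t ∈ S, G.Adj v t → t = s := by
  rw [mtds_iff_pn G S hS]
  subst hH hX
  constructor
  · intro hpn s hsH hsX
    obtain ⟨hsS', hcard⟩ := hsH
    have hsS : s ∈ S := hsS'
    obtain ⟨v, hadj, hpriv⟩ := hpn s hsS
    refine ⟨v, ?_, hadj, hpriv⟩
    intro hvS
    apply hsX
    have hvS' : v ∈ (↑S : Set V) := hvS
    refine ⟨⟨hsS', hcard⟩, v, ?_, hadj⟩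
    rw [hleaf]
    constructor
    · refine ⟨hvS', ?_⟩
      have hreach : (SimpleGraph.induce (↑S : Set V) G).Reachable ⟨s, hsS'⟩ ⟨v, hvS'⟩ :=
        SimpleGraph.Adj.reachable (by exact hadj.symm)
      have hset : {u : (↑S : Set V) |
            (SimpleGraph.induce (↑S : Set V) G).Reachable ⟨v, hvS'⟩ u}
          = {u : (↑S : Set V) |
            (SimpleGraph.induce (↑S : Set V) G).Reachable ⟨s, hsS'⟩ u} := by
        ext u
        exact ⟨fun h => hreach.trans h, fun h => hreach.symm.trans h⟩
      rw [hset]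
      exact hcard
    · have hset : {w : V | w ∈ S ∧ G.Adj v w} = {s} := by
        ext w
        simp only [Set.mem_setOf_eq, Set.mem_singleton_iff]
        exact ⟨fun hw => hpriv w hw.1 hw.2, fun h => h ▸ ⟨hsS, hadj⟩⟩
      rw [hset, Set.ncard_singleton]
  · intro hepn s hsS
    have hsS' : s ∈ (↑S : Set V) := hsS
    by_cases hsH : 3 ≤ Set.ncard {u : (↑S : Set V) |
        (SimpleGraph.induce (↑S : Set V) G).Reachable ⟨s, hsS'⟩ u}
    · by_cases hsX : s ∈ {x ∈ {v : V | ∃ hv : v ∈ (↑S : Set V),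
          3 ≤ Set.ncard {u : (↑S : Set V) |
            (SimpleGraph.induce (↑S : Set V) G).Reachable ⟨v, hv⟩ u}} |
          ∃ u, leafH u ∧ G.Adj u x}
      · obtain ⟨-, u, hleafu, hadjus⟩ := hsX
        rw [hleaf] at hleafu
        obtain ⟨huH, hcard1⟩ := hleafu
        obtain ⟨a, ha⟩ := Set.ncard_eq_one.mp hcard1
        have hsa : s = a := by
          have : s ∈ {w : V | w ∈ S ∧ G.Adj u w} := ⟨hsS, hadjus⟩
          rwa [ha] at this
        refine ⟨u, hadjus, fun t ht hadjut => ?_⟩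
        have : t ∈ ({a} : Set V) := by
          rw [← ha]; exact ⟨ht, hadjut⟩
        rw [Set.mem_singleton_iff] at this
        rw [this, ← hsa]
      · obtain ⟨v, hvS, hadj, hpriv⟩ := hepn s ⟨hsS', hsH⟩ hsX
        exact ⟨v, hadj, hpriv⟩
    · obtain ⟨t, htS, hadjst⟩ := hS s
      refine ⟨t, hadjst.symm, fun w hwS hadjtw => ?_⟩
      by_contra hws
      apply hsH
      have htS' : t ∈ (↑S : Set V) := htS
      have hwS' : w ∈ (↑S : Set V) := hwS
      have hst : s ≠ t := hadjst.ne
      have htw : t ≠ w := hadjtw.ne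
      have hsw : s ≠ w := fun h => hws h.symm
      have hsub : ({⟨s, hsS'⟩, ⟨t, htS'⟩, ⟨w, hwS'⟩} : Set (↑S : Set V)) ⊆
          {u : (↑S : Set V) |
            (SimpleGraph.induce (↑S : Set V) G).Reachable ⟨s, hsS'⟩ u} := by
        rintro u (rfl | rfl | rfl)
        · exact SimpleGraph.Reachable.refl _
        · exact SimpleGraph.Adj.reachable
            (show (SimpleGraph.induce (↑S : Set V) G).Adj ⟨s, hsS'⟩ ⟨t, htS'⟩ from hadjst)
        · exact (SimpleGraph.Adj.reachable
            (show (SimpleGraph.induce (↑S : Set V) G).Adj ⟨s, hsS'⟩ ⟨t, htS'⟩ from hadjst)).trans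
            (SimpleGraph.Adj.reachable
            (show (SimpleGraph.induce (↑S : Set V) G).Adj ⟨t, htS'⟩ ⟨w, hwS'⟩ from hadjtw))
      have h3 : ({⟨s, hsS'⟩, ⟨t, htS'⟩, ⟨w, hwS'⟩} : Set (↑S : Set V)).ncard = 3 := by
        rw [Set.ncard_eq_three]
        exact ⟨_, _, _, fun h => hst (congrArg Subtype.val h),
          fun h => hsw (congrArg Subtype.val h),
          fun h => htw (congrArg Subtype.val h), rfl⟩
      calc 3 = _ := h3.symm
        _ ≤ _ := Set.ncard_le_ncard hsub (Set.toFinite _)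
end

section
/- If G is a connected graph of order n ≥ 3, then γ_t(G) ≤ 2n/3. -/
open Finset

variable {V : Type*} [Fintype V] [DecidableEq V]

/-- The total domination number. -/
noncomputable def gammaT (G : SimpleGraph V) : ℕ :=
  sInf {k | ∃ S : Finset V, IsTDS G S ∧ S.card = k}

section Aux

open SimpleGraph

/-- Total domination of a depth-≤2 spider. -/
lemma spider_tds {W : Type*} [DecidableEq W] (G : SimpleGraph W) (x : W)
    (C Gc : Finset W) (p : W → W)
    (hxC : x ∉ C) (hxG : x ∉ Gc) (hCG : Disjoint C Gc)
    (hC : ∀ v ∈ C, G.Adj v x)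
    (hp : ∀ g ∈ Gc, p g ∈ C ∧ G.Adj g (p g))
    (hne : Gc.Nonempty) :
    ∃ S : Finset W, S ⊆ insert x (C ∪ Gc) ∧ x ∈ S ∧
      (∀ v ∈ insert x (C ∪ Gc), ∃ s ∈ S, G.Adj v s) ∧
      3 * S.card ≤ 2 * (insert x (C ∪ Gc)).card := by
  refine ⟨insert x (Gc.image p), ?_, Finset.mem_insert_self _ _, ?_, ?_⟩
  · intro s hs
    rcases Finset.mem_insert.mp hs with rfl | h
    · exact Finset.mem_insert_self _ _
    · obtain ⟨g, hg, rfl⟩ := Finset.mem_image.mp h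
      exact Finset.mem_insert_of_mem (Finset.mem_union_left _ ((hp g hg).1))
  · intro v hv
    rcases Finset.mem_insert.mp hv with rfl | h
    · obtain ⟨g, hg⟩ := hne
      exact ⟨p g, Finset.mem_insert_of_mem (Finset.mem_image_of_mem _ hg),
        (hC _ (hp g hg).1).symm⟩
    · rcases Finset.mem_union.mp h with h | h
      · exact ⟨x, Finset.mem_insert_self _ _, hC v h⟩
      · exact ⟨p v, Finset.mem_insert_of_mem (Finset.mem_image_of_mem _ h), (hp v h).2⟩
  · have h1 : (Gc.image p).card ≤ Gc.card := Finset.card_image_le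
    have h2 : (Gc.image p).card ≤ C.card := by
      apply Finset.card_le_card
      intro s hs
      obtain ⟨g, hg, rfl⟩ := Finset.mem_image.mp hs
      exact (hp g hg).1
    have h3 : 1 ≤ (Gc.image p).card := Finset.card_pos.mpr (hne.image p)
    have hcB : (insert x (C ∪ Gc)).card = 1 + C.card + Gc.card := by
      rw [Finset.card_insert_of_notMem (by simp [hxC, hxG]),
        Finset.card_union_of_disjoint hCG]
      ring
    have hcS : (insert x (Gc.image p)).card ≤ 1 + (Gc.image p).card := by
      have := Finset.card_insert_le x (Gc.image p)
      omega
    omega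

universe u

lemma key : ∀ (n : ℕ) {W : Type u} [Fintype W] [DecidableEq W] (G : SimpleGraph W),
    G.Connected → Fintype.card W ≤ n → 3 ≤ Fintype.card W →
    ∃ S : Finset W, (∀ v, ∃ s ∈ S, G.Adj v s) ∧ 3 * S.card ≤ 2 * Fintype.card W := by
  intro n
  induction n with
  | zero => intro W _ _ G _ hc h3; omega
  | succ n ih =>
    intro W _ _ G hconn hcard h3
    classical
    have hneW : Nonempty W := Fintype.card_pos_iff.mp (by omega)
    obtain ⟨r⟩ := hneW
    -- parent function
    have hpar : ∀ v : W, v ≠ r → ∃ u, G.Adj v u ∧ G.dist r u + 1 = G.dist r v := by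
      intro v hv
      obtain ⟨w, hw⟩ := hconn.exists_walk_length_eq_dist r v
      cases hq : w.reverse with
      | nil => exact absurd rfl hv
      | cons hadj q =>
        rename_i u
        have hlen : q.length + 1 = G.dist r v := by
          have h := congrArg SimpleGraph.Walk.length hq
          simp only [SimpleGraph.Walk.length_reverse, SimpleGraph.Walk.length_cons, hw] at h
          omega
        have h1 : G.dist r u ≤ q.length := by
          have := SimpleGraph.dist_le q.reverse
          rwa [SimpleGraph.Walk.length_reverse] at this
        have h2 : G.dist r v ≤ G.dist r u + 1 := by
          obtain ⟨w2, hw2⟩ := hconn.exists_walk_length_eq_dist r u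
          have := SimpleGraph.dist_le (w2.concat hadj.symm)
          rwa [SimpleGraph.Walk.length_concat, hw2] at this
        exact ⟨u, hadj, by omega⟩
    choose f hf using hpar
    set p : W → W := fun v => if h : v = r then r else f v h with hpdef
    have hpr : p r = r := by simp [hpdef]
    have hp1 : ∀ v, v ≠ r → G.Adj v (p v) := by
      intro v hv; simp only [hpdef, dif_neg hv]; exact (hf v hv).1
    have hp2 : ∀ v, v ≠ r → G.dist r (p v) + 1 = G.dist r v := by
      intro v hv; simp only [hpdef, dif_neg hv]; exact (hf v hv).2
    have dist0 : ∀ v, G.dist r v = 0 → v = r := by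
      intro v h; exact ((hconn.dist_eq_zero_iff).mp h).symm
    have distne : ∀ v, v ≠ r → G.dist r v ≠ 0 := by
      intro v hv h; exact hv (dist0 v h)
    -- deepest vertex
    obtain ⟨v0, -, hmax⟩ := Finset.exists_max_image Finset.univ (fun v => G.dist r v)
      ⟨r, Finset.mem_univ r⟩
    simp only [Finset.mem_univ, forall_const] at hmax
    set d := G.dist r v0 with hddef
    by_cases hd1 : d ≤ 1
    · -- star case
      obtain ⟨v₁, hv₁⟩ := Fintype.exists_ne_of_one_lt_card (by omega) r
      have hadjall : ∀ v : W, v ≠ r → G.Adj v r := by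
        intro v hv
        have hz : G.dist r v ≠ 0 := distne v hv
        have h2 : G.dist r v ≤ 1 := le_trans (hmax v) hd1
        have hone : G.dist r v = 1 := by omega
        exact (SimpleGraph.dist_eq_one_iff_adj.mp hone).symm
      refine ⟨{r, v₁}, ?_, ?_⟩
      · intro v
        by_cases hv : v = r
        · exact ⟨v₁, by simp, hv ▸ (hadjall v₁ hv₁).symm⟩
        · exact ⟨r, by simp, hadjall v hv⟩
      · have hc2 : ({r, v₁} : Finset W).card ≤ 2 := by
          have := Finset.card_insert_le r ({v₁} : Finset W)
          simpa using this
        omega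
    · by_cases hd2 : d ≤ 2
      · -- depth exactly 2 : whole graph is a spider
        have hd : d = 2 := by omega
        set C : Finset W := Finset.univ.filter (fun v => v ≠ r ∧ p v = r) with hCdef
        set Gc : Finset W := Finset.univ.filter (fun v => p v ∈ C) with hGcdef
        have hrC : r ∉ C := by simp [hCdef]
        have hCd : ∀ v ∈ C, G.dist r v = 1 := by
          intro v hv
          simp only [hCdef, Finset.mem_filter] at hv
          have := hp2 v hv.2.1
          rw [hv.2.2] at this
          simpa [SimpleGraph.dist_self] using this.symm
        have hGcne : ∀ v ∈ Gc, v ≠ r := by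
          intro v hv hvr
          simp only [hGcdef, Finset.mem_filter] at hv
          rw [hvr, hpr] at hv
          exact hrC hv.2
        have hGcd : ∀ v ∈ Gc, G.dist r v = 2 := by
          intro v hv
          have hv' := hv
          simp only [hGcdef, Finset.mem_filter] at hv'
          have := hp2 v (hGcne v hv)
          rw [hCd _ hv'.2] at this
          omega
        have hrGc : r ∉ Gc := fun h => hGcne r h rfl
        have hdisj : Disjoint C Gc := by
          rw [Finset.disjoint_left]
          intro a ha ha'
          have := hCd a ha
          have := hGcd a ha'
          omega
        have hCadj : ∀ v ∈ C, G.Adj v r := by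
          intro v hv
          simp only [hCdef, Finset.mem_filter] at hv
          have := hp1 v hv.2.1
          rwa [hv.2.2] at this
        have hpGc : ∀ g ∈ Gc, p g ∈ C ∧ G.Adj g (p g) := by
          intro g hg
          have hg' := hg
          simp only [hGcdef, Finset.mem_filter] at hg'
          exact ⟨hg'.2, hp1 g (hGcne g hg)⟩
        have hne : Gc.Nonempty := by
          refine ⟨v0, ?_⟩
          have hv0r : v0 ≠ r := by
            intro h; rw [h] at hddef; rw [SimpleGraph.dist_self] at hddef; omega
          have hpv0 : G.dist r (p v0) = 1 := by
            have := hp2 v0 hv0r; omega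
          have hpv0r : p v0 ≠ r := by
            intro h; rw [h, SimpleGraph.dist_self] at hpv0; omega
          have hppv0 : p (p v0) = r := by
            apply dist0
            have := hp2 (p v0) hpv0r
            omega
          simp only [hGcdef, hCdef, Finset.mem_filter, Finset.mem_univ, true_and]
          exact ⟨hpv0r, hppv0⟩
        obtain ⟨S, _, _, hSdom, hScard⟩ :=
          spider_tds G r C Gc p hrC hrGc hdisj hCadj hpGc hne
        have hcov : insert r (C ∪ Gc) = Finset.univ := by
          apply Finset.eq_univ_of_forall
          intro v
          by_cases hvr : v = r
          · exact hvr ▸ Finset.mem_insert_self _ _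
          · have hvd : G.dist r v = 1 ∨ G.dist r v = 2 := by
              have := hmax v; have := distne v hvr; omega
            rcases hvd with h | h
            · have : p v = r := by
                apply dist0; have := hp2 v hvr; omega
              apply Finset.mem_insert_of_mem; apply Finset.mem_union_left
              simp only [hCdef, Finset.mem_filter, Finset.mem_univ, true_and]
              exact ⟨hvr, this⟩
            · have hpv1 : G.dist r (p v) = 1 := by have := hp2 v hvr; omega
              have hpvr : p v ≠ r := by
                intro hh; rw [hh, SimpleGraph.dist_self] at hpv1; omega
              have hppv : p (p v) = r := by
                apply dist0; have := hp2 (p v) hpvr; omega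
              apply Finset.mem_insert_of_mem; apply Finset.mem_union_right
              simp only [hGcdef, hCdef, Finset.mem_filter, Finset.mem_univ, true_and]
              exact ⟨hpvr, hppv⟩
        rw [hcov] at hSdom hScard
        rw [Finset.card_univ] at hScard
        exact ⟨S, fun v => hSdom v (Finset.mem_univ v), hScard⟩
      · -- d ≥ 3 : remove a branch, recurse
        have hd3 : 3 ≤ d := by omega
        have hv0r : v0 ≠ r := by
          intro h; rw [h] at hddef; rw [SimpleGraph.dist_self] at hddef; omega
        set v1 := p v0 with hv1def
        have hdv1 : G.dist r v1 + 1 = d := hp2 v0 hv0r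
        have hv1r : v1 ≠ r := by
          intro h; rw [h, SimpleGraph.dist_self] at hdv1; omega
        set v2 := p v1 with hv2def
        have hdv2 : G.dist r v2 + 2 = d := by
          have h := hp2 v1 hv1r; rw [← hv2def] at h; omega
        have hv2r : v2 ≠ r := by
          intro h; rw [h, SimpleGraph.dist_self] at hdv2; omega
        set v3 := p v2 with hv3def
        have hdv3 : G.dist r v3 + 3 = d := by
          have h := hp2 v2 hv2r; rw [← hv3def] at h; omega
        set D2 := G.dist r v2 with hD2def
        set C : Finset W := Finset.univ.filter (fun v => p v = v2) with hCdef
        set Gc : Finset W := Finset.univ.filter (fun v => p v ∈ C) with hGcdef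
        have hrC : r ∉ C := by
          simp only [hCdef, Finset.mem_filter, Finset.mem_univ, true_and, hpr]
          exact fun h => hv2r h.symm
        have hCne : ∀ v ∈ C, v ≠ r := by
          intro v hv hvr; rw [hvr] at hv; exact hrC hv
        have hCd : ∀ v ∈ C, G.dist r v = D2 + 1 := by
          intro v hv
          have hv' := hv
          simp only [hCdef, Finset.mem_filter] at hv'
          have := hp2 v (hCne v hv)
          rw [hv'.2] at this
          omega
        have hrGc : r ∉ Gc := by
          simp only [hGcdef, Finset.mem_filter, Finset.mem_univ, true_and, hpr]
          exact hrC
        have hGcne : ∀ v ∈ Gc, v ≠ r := by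
          intro v hv hvr; rw [hvr] at hv; exact hrGc hv
        have hGcd : ∀ v ∈ Gc, G.dist r v = D2 + 2 := by
          intro v hv
          have hv' := hv
          simp only [hGcdef, Finset.mem_filter] at hv'
          have := hp2 v (hGcne v hv)
          rw [hCd _ hv'.2] at this
          omega
        have hv2C : v2 ∉ C := by
          intro h; have := hCd v2 h; omega
        have hv2Gc : v2 ∉ Gc := by
          intro h; have := hGcd v2 h; omega
        have hdisj : Disjoint C Gc := by
          rw [Finset.disjoint_left]
          intro a ha ha'
          have := hCd a ha
          have := hGcd a ha'
          omega
        have hCadj : ∀ v ∈ C, G.Adj v v2 := by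
          intro v hv
          have hv' := hv
          simp only [hCdef, Finset.mem_filter] at hv'
          have := hp1 v (hCne v hv)
          rwa [hv'.2] at this
        have hpGc : ∀ g ∈ Gc, p g ∈ C ∧ G.Adj g (p g) := by
          intro g hg
          have hg' := hg
          simp only [hGcdef, Finset.mem_filter] at hg'
          exact ⟨hg'.2, hp1 g (hGcne g hg)⟩
        have hv1C : v1 ∈ C := by
          rw [hCdef, Finset.mem_filter]
          exact ⟨Finset.mem_univ _, hv2def.symm⟩
        have hv0Gc : v0 ∈ Gc := by
          simp only [hGcdef, Finset.mem_filter, Finset.mem_univ, true_and]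
          exact hv1C
        obtain ⟨SB, hSBsub, hv2SB, hSBdom, hSBcard⟩ :=
          spider_tds G v2 C Gc p hv2C hv2Gc hdisj hCadj hpGc ⟨v0, hv0Gc⟩
        set B := insert v2 (C ∪ Gc) with hBdef
        set A' := Finset.univ \ B with hA'def
        have hrB : r ∉ B := by
          simp only [hBdef, Finset.mem_insert, Finset.mem_union]
          push_neg
          exact ⟨fun h => hv2r h.symm, hrC, hrGc⟩
        have hrA' : r ∈ A' := by
          simp only [hA'def, Finset.mem_sdiff, Finset.mem_univ, true_and]
          exact hrB
        have hv3B : v3 ∉ B := by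
          simp only [hBdef, Finset.mem_insert, Finset.mem_union]
          push_neg
          refine ⟨?_, ?_, ?_⟩
          · intro h
            have h2 := hp2 v2 hv2r
            rw [← hv3def, h] at h2
            omega
          · intro h; have := hCd v3 h; omega
          · intro h; have := hGcd v3 h; omega
        have hv3A' : v3 ∈ A' := by
          simp only [hA'def, Finset.mem_sdiff, Finset.mem_univ, true_and]
          exact hv3B
        -- A' is parent-closed
        have hclosed : ∀ v ∈ A', v ≠ r → p v ∈ A' := by
          intro v hv hvr
          simp only [hA'def, Finset.mem_sdiff, Finset.mem_univ, true_and] at hv ⊢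
          intro hpvB
          simp only [hBdef, Finset.mem_insert, Finset.mem_union] at hpvB
          apply hv
          rcases hpvB with h | h | h
          · simp only [hBdef, Finset.mem_insert, Finset.mem_union]
            right; left
            simp only [hCdef, Finset.mem_filter, Finset.mem_univ, true_and]
            exact h
          · simp only [hBdef, Finset.mem_insert, Finset.mem_union]
            right; right
            simp only [hGcdef, Finset.mem_filter, Finset.mem_univ, true_and]
            exact h
          · exfalso
            have h1 := hGcd _ h
            have h2 := hp2 v hvr
            have := hmax v
            omega
        have hpvne : ∀ v, v ≠ r → p v ≠ v := by
          intro v hv heq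
          have := hp2 v hv
          rw [heq] at this
          omega
        -- cards
        have hBcard3 : 3 ≤ B.card := by
          have hsub : ({v2, v1, v0} : Finset W) ⊆ B := by
            intro a ha
            simp only [Finset.mem_insert, Finset.mem_singleton] at ha
            rcases ha with rfl | rfl | rfl
            · exact Finset.mem_insert_self _ _
            · exact Finset.mem_insert_of_mem (Finset.mem_union_left _ hv1C)
            · exact Finset.mem_insert_of_mem (Finset.mem_union_right _ hv0Gc)
          have hcard3 : ({v2, v1, v0} : Finset W).card = 3 := by
            rw [Finset.card_insert_of_notMem, Finset.card_insert_of_notMem,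
              Finset.card_singleton]
            · simp only [Finset.mem_singleton]
              intro h
              have h1 := hCd v1 hv1C
              have h0 := hGcd v0 hv0Gc
              rw [h] at h1
              omega
            · simp only [Finset.mem_insert, Finset.mem_singleton]
              push_neg
              constructor
              · intro h; have := hCd v1 hv1C; rw [← h] at this; omega
              · intro h; have := hGcd v0 hv0Gc; rw [← h] at this; omega
          calc 3 = ({v2, v1, v0} : Finset W).card := hcard3.symm
            _ ≤ B.card := Finset.card_le_card hsub
        have hA'card : A'.card = Fintype.card W - B.card := by
          rw [hA'def, Finset.card_sdiff_of_subset (Finset.subset_univ _), Finset.card_univ]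
        have hBle : B.card ≤ Fintype.card W := by
          rw [← Finset.card_univ]; exact Finset.card_le_card (Finset.subset_univ _)
        by_cases hA'3 : 3 ≤ A'.card
        · -- recurse
          set G' : SimpleGraph {x // x ∈ A'} := G.comap (fun x => x.val) with hG'def
          have hreach : ∀ (k : ℕ) (v : {x // x ∈ A'}), G.dist r v.val ≤ k →
              G'.Reachable v ⟨r, hrA'⟩ := by
            intro k
            induction k with
            | zero =>
              intro v h
              by_cases hv : v.val = r
              · have : v = ⟨r, hrA'⟩ := Subtype.ext hv
                rw [this]
              · exfalso; exact distne v.val hv (by omega)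
            | succ k ihk =>
              intro v h
              by_cases hv : v.val = r
              · have : v = ⟨r, hrA'⟩ := Subtype.ext hv
                rw [this]
              · have hpv : p v.val ∈ A' := hclosed v.val v.2 hv
                have hdlt : G.dist r (p v.val) ≤ k := by
                  have := hp2 v.val hv; omega
                have hadj : G'.Adj v ⟨p v.val, hpv⟩ := by
                  simp only [hG'def, SimpleGraph.comap_adj]
                  exact hp1 v.val hv
                exact hadj.reachable.trans (ihk ⟨p v.val, hpv⟩ hdlt)
          have hG'conn : G'.Connected := by
            rw [SimpleGraph.connected_iff]
            constructor
            · intro a b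
              exact ((hreach (G.dist r a.val) a le_rfl).trans
                (hreach (G.dist r b.val) b le_rfl).symm)
            · exact ⟨⟨r, hrA'⟩⟩
          have hcardA' : Fintype.card {x // x ∈ A'} = A'.card := Fintype.card_coe A'
          have hWsum : A'.card + B.card = Fintype.card W := by
            omega
          obtain ⟨S', hS'dom, hS'card⟩ := ih G' hG'conn (by omega) (by omega)
          refine ⟨SB ∪ S'.image Subtype.val, ?_, ?_⟩
          · intro v
            by_cases hvB : v ∈ B
            · obtain ⟨s, hs, hadj⟩ := hSBdom v hvB
              exact ⟨s, Finset.mem_union_left _ hs, hadj⟩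
            · have hvA' : v ∈ A' := by
                simp only [hA'def, Finset.mem_sdiff, Finset.mem_univ, true_and]
                exact hvB
              obtain ⟨s, hs, hadj⟩ := hS'dom ⟨v, hvA'⟩
              refine ⟨s.val, Finset.mem_union_right _ (Finset.mem_image_of_mem _ hs), ?_⟩
              simpa [hG'def, SimpleGraph.comap_adj] using hadj
          · have hu := Finset.card_union_le SB (S'.image Subtype.val)
            have him : (S'.image Subtype.val).card ≤ S'.card := Finset.card_image_le
            rw [hcardA'] at hS'card
            omega
        · -- A' has at most 2 vertices
          have hA'pos : 1 ≤ A'.card := Finset.card_pos.mpr ⟨r, hrA'⟩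
          by_cases hA'1 : A'.card = 1
          · -- A' = {r} = {v3}
            have hv3r : v3 = r := by
              by_contra hne'
              have : ({v3, r} : Finset W) ⊆ A' := by
                intro a ha
                simp only [Finset.mem_insert, Finset.mem_singleton] at ha
                rcases ha with rfl | rfl
                · exact hv3A'
                · exact hrA'
              have h2 : ({v3, r} : Finset W).card = 2 := by
                rw [Finset.card_insert_of_notMem (by simpa using hne'),
                  Finset.card_singleton]
              have := Finset.card_le_card this
              omega
            refine ⟨SB, ?_, ?_⟩
            · intro v
              by_cases hvB : v ∈ B
              · exact hSBdom v hvB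
              · have hvA' : v ∈ A' := by
                  simp only [hA'def, Finset.mem_sdiff, Finset.mem_univ, true_and]
                  exact hvB
                have hv : v = r := by
                  have : A' = {r} := Finset.eq_singleton_iff_unique_mem.mpr
                    ⟨hrA', fun x hx => by
                      by_contra hxr
                      have hsub : ({x, r} : Finset W) ⊆ A' := by
                        intro a ha
                        simp only [Finset.mem_insert, Finset.mem_singleton] at ha
                        rcases ha with rfl | rfl
                        · exact hx
                        · exact hrA'
                      have h2 : ({x, r} : Finset W).card = 2 := by
                        rw [Finset.card_insert_of_notMem (by simpa using hxr),
                          Finset.card_singleton]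
                      have := Finset.card_le_card hsub
                      omega⟩
                  rw [this] at hvA'
                  simpa using hvA'
                refine ⟨v2, hv2SB, ?_⟩
                rw [hv, ← hv3r]
                exact ((hp1 v2 hv2r).symm : G.Adj (p v2) v2)
            · omega
          · -- A'.card = 2
            have hA'2 : A'.card = 2 := by omega
            have hA'eq : ∀ x ∈ A', ∀ y ∈ A', x ≠ y → A' = {x, y} := by
              intro x hx y hy hxy
              apply Finset.eq_of_superset_of_card_ge
              · intro a ha
                simp only [Finset.mem_insert, Finset.mem_singleton] at ha
                rcases ha with rfl | rfl
                · exact hx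
                · exact hy
              · rw [Finset.card_insert_of_notMem (by simpa using hxy),
                  Finset.card_singleton, hA'2]
            refine ⟨insert v3 SB, ?_, ?_⟩
            · intro v
              by_cases hvB : v ∈ B
              · obtain ⟨s, hs, hadj⟩ := hSBdom v hvB
                exact ⟨s, Finset.mem_insert_of_mem hs, hadj⟩
              · have hvA' : v ∈ A' := by
                  simp only [hA'def, Finset.mem_sdiff, Finset.mem_univ, true_and]
                  exact hvB
                by_cases hvv3 : v = v3
                · refine ⟨v2, Finset.mem_insert_of_mem hv2SB, ?_⟩
                  rw [hvv3]
                  exact ((hp1 v2 hv2r).symm : G.Adj (p v2) v2)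
                · refine ⟨v3, Finset.mem_insert_self _ _, ?_⟩
                  by_cases hvr : v = r
                  · -- v = r, so v3 ≠ r, A' = {v3, r}, p v3 = r
                    have hv3r : v3 ≠ r := by rw [← hvr]; exact fun h => hvv3 h.symm
                    have heq : A' = {v3, r} := hA'eq v3 hv3A' r hrA' hv3r
                    have hpv3 : p v3 ∈ A' := hclosed v3 hv3A' hv3r
                    rw [heq] at hpv3
                    simp only [Finset.mem_insert, Finset.mem_singleton] at hpv3
                    rcases hpv3 with h | h
                    · exact absurd h (hpvne v3 hv3r)
                    · have := hp1 v3 hv3r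
                      rw [h] at this
                      rw [hvr]
                      exact this.symm
                  · -- v ≠ r : A' = {r, v}, so v3 ∈ {r,v}, v3 = r, p v = r = v3
                    have heq : A' = {r, v} := hA'eq r hrA' v hvA' (fun h => hvr h.symm)
                    have hv3mem : v3 ∈ ({r, v} : Finset W) := heq ▸ hv3A'
                    simp only [Finset.mem_insert, Finset.mem_singleton] at hv3mem
                    rcases hv3mem with h | h
                    · have hpv : p v ∈ A' := hclosed v hvA' hvr
                      rw [heq] at hpv
                      simp only [Finset.mem_insert, Finset.mem_singleton] at hpv
                      rcases hpv with h' | h'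
                      · have := hp1 v hvr
                        rw [h', ← h] at this
                        exact this
                      · exact absurd h' (hpvne v hvr)
                    · exact absurd h.symm hvv3
            · have := Finset.card_insert_le v3 SB
              omega

end Aux

theorem stmt_3 (G : SimpleGraph V) (hG : G.Connected) (hn : 3 ≤ Fintype.card V) :
    3 * gammaT G ≤ 2 * Fintype.card V := by
  obtain ⟨S, hS, hc⟩ := key (Fintype.card V) G hG le_rfl hn
  have h : gammaT G ≤ S.card := Nat.sInf_le ⟨S, hS, rfl⟩
  omega
end

section
/- A connected graph G of order n ≥ 3 satisfies Γ_t(G) = n − 1 if and only if n is odd and G is obtained from the disjoint union of (n−1)/2 copies of K2 by joining a new vertex to at least one vertex of each K2. -/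
open Finset

set_option linter.unusedSectionVars false

variable {V : Type*} [Fintype V] [DecidableEq V]

/-- The upper total domination number. -/
noncomputable def GammaT (G : SimpleGraph V) : ℕ :=
  sSup {k | ∃ S : Finset V, IsMTDS G S ∧ S.card = k}

lemma exists_mtds_subset (G : SimpleGraph V) :
    ∀ S : Finset V, IsTDS G S → ∃ T, T ⊆ S ∧ IsMTDS G T := by
  intro S
  induction S using Finset.strongInductionOn with
  | _ S ih =>
    intro hS
    by_cases h : ∃ T, T ⊂ S ∧ IsTDS G T
    · obtain ⟨T, hT, hT2⟩ := h
      obtain ⟨U, hU, hU2⟩ := ih T hT hT2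
      exact ⟨U, hU.trans hT.subset, hU2⟩
    · push_neg at h
      exact ⟨S, subset_rfl, hS, fun T hT => h T hT⟩

lemma exists_adj (G : SimpleGraph V) (hG : G.Connected) (hn : 1 < Fintype.card V) (v : V) :
    ∃ u, G.Adj v u := by
  obtain ⟨u, hu⟩ := Fintype.exists_ne_of_one_lt_card hn v
  obtain ⟨p⟩ := hG.preconnected v u
  cases p with
  | nil => exact absurd rfl hu.symm
  | cons h q => exact ⟨_, h⟩

lemma walk_two {G : SimpleGraph V} {a b : V} (h1 : ∀ z, G.Adj a z → z = b)
    (h2 : ∀ z, G.Adj b z → z = a) :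
    ∀ {x c : V}, G.Walk x c → (x = a ∨ x = b) → (c = a ∨ c = b) := by
  intro x c p
  induction p with
  | nil => exact id
  | cons h q ih =>
    rintro (rfl | rfl)
    · exact ih (Or.inr (h1 _ h))
    · exact ih (Or.inl (h2 _ h))

lemma even_card_invol (f : V → V) :
    ∀ T : Finset V, (∀ x ∈ T, f x ∈ T) → (∀ x ∈ T, f x ≠ x) → (∀ x ∈ T, f (f x) = x) →
    Even T.card := by
  intro T
  induction T using Finset.strongInductionOn with
  | _ T ih =>
    intro h1 h2 h3
    rcases T.eq_empty_or_nonempty with rfl | ⟨x, hx⟩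
    · simp
    · have hfx := h1 x hx
      have hne := h2 x hx
      have hmemfx : f x ∈ T.erase x := Finset.mem_erase.2 ⟨hne, hfx⟩
      set T' := (T.erase x).erase (f x) with hT'
      have hsub : T' ⊂ T :=
        (Finset.erase_subset _ _).trans_ssubset (Finset.erase_ssubset hx)
      have hmemT' : ∀ y, y ∈ T' ↔ y ∈ T ∧ y ≠ x ∧ y ≠ f x := by
        intro y; simp [hT', Finset.mem_erase]; tauto
      have hE : Even T'.card := by
        apply ih T' hsub
        · intro y hy
          rw [hmemT'] at hy ⊢
          obtain ⟨hyT, hyx, hyfx⟩ := hy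
          refine ⟨h1 y hyT, ?_, ?_⟩
          · intro h; apply hyfx; rw [← h3 y hyT, h]
          · intro h
            apply hyx
            have := congrArg f h
            rwa [h3 y hyT, h3 x hx] at this
        · intro y hy; exact h2 y ((hmemT' y).1 hy).1
        · intro y hy; exact h3 y ((hmemT' y).1 hy).1
      have hcard : T'.card = T.card - 2 := by
        rw [hT', Finset.card_erase_of_mem hmemfx, Finset.card_erase_of_mem hx]
        omega
      have h2le : 2 ≤ T.card := by
        have : ({x, f x} : Finset V) ⊆ T := by
          intro y hy; rcases Finset.mem_insert.1 hy with rfl | hy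
          · exact hx
          · rw [Finset.mem_singleton.1 hy]; exact hfx
        calc 2 = ({x, f x} : Finset V).card := (Finset.card_pair hne.symm).symm
          _ ≤ T.card := Finset.card_le_card this
      obtain ⟨r, hr⟩ := hE
      exact ⟨r + 1, by omega⟩

theorem stmt_4 (G : SimpleGraph V) (hG : G.Connected) (hn : 3 ≤ Fintype.card V) :
    GammaT G = Fintype.card V - 1 ↔
      (Odd (Fintype.card V) ∧ ∃ w : V,
        (∀ v : V, v ≠ w → ∃! u : V, u ≠ w ∧ G.Adj v u) ∧
        (∀ u v : V, u ≠ w → v ≠ w → G.Adj u v → (G.Adj w u ∨ G.Adj w v))) := by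
  classical
  set n := Fintype.card V with hncard
  have hadjall : ∀ v : V, ∃ u, G.Adj v u := exists_adj G hG (by omega)
  have hKbdd : BddAbove {k | ∃ S : Finset V, IsMTDS G S ∧ S.card = k} := by
    refine ⟨n, fun k hk => ?_⟩
    obtain ⟨S, _, rfl⟩ := hk
    exact (Finset.card_le_card (Finset.subset_univ S)).trans (le_of_eq Finset.card_univ)
  have hunivTDS : IsTDS G (Finset.univ : Finset V) := by
    intro v
    obtain ⟨u, hu⟩ := hadjall v
    exact ⟨u, Finset.mem_univ u, hu⟩
  have hKne : {k | ∃ S : Finset V, IsMTDS G S ∧ S.card = k}.Nonempty := by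
    obtain ⟨T, _, hT⟩ := exists_mtds_subset G Finset.univ hunivTDS
    exact ⟨T.card, T, hT, rfl⟩
  constructor
  · -- forward direction
    intro hGam
    have hmem : n - 1 ∈ {k | ∃ S : Finset V, IsMTDS G S ∧ S.card = k} := by
      rw [← hGam]; exact Nat.sSup_mem hKne hKbdd
    obtain ⟨S, ⟨hTDS, hMin⟩, hcard⟩ := hmem
    -- the missing vertex
    have hcompl : Sᶜ.card = 1 := by
      rw [Finset.card_compl, hcard]; omega
    obtain ⟨w, hw⟩ := Finset.card_eq_one.1 hcompl
    have hmemS : ∀ x : V, x ∈ S ↔ x ≠ w := by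
      intro x
      rw [← Finset.notMem_compl, hw, Finset.mem_singleton]
    -- private neighbours
    have priv : ∀ x ∈ S, ∃ z, G.Adj z x ∧ ∀ y, G.Adj z y → y ∈ S → y = x := by
      intro x hx
      have hnt := hMin (S.erase x) (Finset.erase_ssubset hx)
      unfold IsTDS at hnt
      push_neg at hnt
      obtain ⟨z, hz⟩ := hnt
      obtain ⟨s, hsS, hadj⟩ := hTDS z
      have hsx : s = x := by
        by_contra hne
        exact hz s (Finset.mem_erase.2 ⟨hne, hsS⟩) hadj
      subst hsx
      refine ⟨z, hadj, ?_⟩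
      intro y hy hyS
      by_contra hne
      exact hz y (Finset.mem_erase.2 ⟨hne, hyS⟩) hy
    -- uniqueness of non-w neighbours
    have uniq : ∀ a b c : V, a ≠ w → b ≠ w → c ≠ w → G.Adj a b → G.Adj a c → b = c := by
      intro a b c haw hbw hcw hab hac
      by_contra hbc
      have haS : a ∈ S := (hmemS a).2 haw
      have hbS : b ∈ S := (hmemS b).2 hbw
      have hcS : c ∈ S := (hmemS c).2 hcw
      -- choose private neighbours
      set p : V → V := fun x => if hx : x ∈ S then (priv x hx).choose else x with hp
      have pspec : ∀ x (hx : x ∈ S),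
          G.Adj (p x) x ∧ ∀ y, G.Adj (p x) y → y ∈ S → y = x := by
        intro x hx
        simp only [hp, dif_pos hx]
        exact (priv x hx).choose_spec
      have pInj : Set.InjOn p S := by
        intro x hx y hy hxy
        have h1 := (pspec x hx).1
        have h2 := (pspec y hy).2
        rw [hxy] at h1
        exact h2 x h1 hx
      have himgcard : (S.image p).card = n - 1 := by
        rw [Finset.card_image_of_injOn pInj, hcard]
      have hanotimg : a ∉ S.image p := by
        intro hmem
        obtain ⟨y, hyS, hpy⟩ := Finset.mem_image.1 hmem
        have hspec := (pspec y hyS).2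
        rw [hpy] at hspec
        have hb := hspec b hab hbS
        have hc := hspec c hac hcS
        exact hbc (hb.trans hc.symm)
      have himgsub : S.image p ⊆ Finset.univ.erase a := by
        intro t ht
        refine Finset.mem_erase.2 ⟨?_, Finset.mem_univ t⟩
        rintro rfl; exact hanotimg ht
      have himg : S.image p = Finset.univ.erase a := by
        apply Finset.eq_of_subset_of_card_le himgsub
        rw [Finset.card_erase_of_mem (Finset.mem_univ a), Finset.card_univ, himgcard]
      -- w is in the image
      have hwimg : w ∈ S.image p := by
        rw [himg]
        exact Finset.mem_erase.2 ⟨fun h => haw h.symm, Finset.mem_univ w⟩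
      obtain ⟨x₀, hx₀S, hpx₀⟩ := Finset.mem_image.1 hwimg
      have hwspec : ∀ t, G.Adj w t → t = x₀ := by
        intro t ht
        have := (pspec x₀ hx₀S).2
        rw [hpx₀] at this
        exact this t ht ((hmemS t).2 ht.ne')
      -- every x ∈ S other than a has a unique S-neighbour
      have uniqS : ∀ x, x ∈ S → G.Adj x a → ∀ t, G.Adj x t → t ∈ S → t = a := by
        intro x hxS hxa t hxt htS
        have hximg : x ∈ S.image p := by
          rw [himg]
          exact Finset.mem_erase.2 ⟨hxa.ne, Finset.mem_univ x⟩
        obtain ⟨y, hyS, hpy⟩ := Finset.mem_image.1 hximg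
        have hspec := (pspec y hyS).2
        rw [hpy] at hspec
        have hya : a = y := hspec a hxa haS
        have hyt : t = y := hspec t hxt htS
        rw [hyt, ← hya]
      have hb2 : ∀ t, G.Adj b t → t ∈ S → t = a := uniqS b hbS hab.symm
      have hc2 : ∀ t, G.Adj c t → t ∈ S → t = a := uniqS c hcS hac.symm
      -- pick d ∈ {b,c} with d ≠ x₀
      obtain ⟨d, hdadj, hdS, hdx₀, hd4⟩ :
          ∃ d, G.Adj a d ∧ d ∈ S ∧ d ≠ x₀ ∧ ∀ t, G.Adj d t → t ∈ S → t = a := by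
        by_cases hbx : b = x₀
        · exact ⟨c, hac, hcS, fun h => hbc (hbx.trans h.symm), hc2⟩
        · exact ⟨b, hab, hbS, hbx, hb2⟩
      have hNd : ∀ t, G.Adj d t → t = a := by
        intro t ht
        by_cases htw : t = w
        · subst htw
          exact absurd (hwspec d ht.symm) hdx₀
        · exact hd4 t ht ((hmemS t).2 htw)
      obtain ⟨z, hzd, hzspec⟩ := priv d hdS
      have hza : z = a := hNd z hzd.symm
      subst hza
      exact hbc ((hzspec b hab hbS).trans (hzspec c hac hcS).symm)
    -- existence of non-w neighbours
    have hex : ∀ v : V, ∃ u, u ≠ w ∧ G.Adj v u := by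
      intro v
      obtain ⟨s, hsS, hadj⟩ := hTDS v
      exact ⟨s, (hmemS s).1 hsS, hadj⟩
    -- the matching function
    set f : V → V := fun v => (hex v).choose with hf
    have fspec : ∀ v, f v ≠ w ∧ G.Adj v (f v) := fun v => (hex v).choose_spec
    have hparity : Odd n := by
      have hEv : Even (Finset.univ.erase w).card := by
        apply even_card_invol f
        · intro x hx
          exact Finset.mem_erase.2 ⟨(fspec x).1, Finset.mem_univ _⟩
        · intro x hx
          exact fun h => G.irrefl (h ▸ (fspec x).2)
        · intro x hx
          have hxw : x ≠ w := (Finset.mem_erase.1 hx).1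
          exact uniq (f x) (f (f x)) x (fspec x).1 (fspec (f x)).1 hxw
            (fspec (f x)).2 ((fspec x).2.symm)
      rw [Finset.card_erase_of_mem (Finset.mem_univ w), Finset.card_univ] at hEv
      obtain ⟨r, hr⟩ := hEv
      exact ⟨r, by omega⟩
    refine ⟨hparity, w, ?_, ?_⟩
    · intro v hv
      refine ⟨f v, ⟨(fspec v).1, (fspec v).2⟩, ?_⟩
      rintro y ⟨hyw, hvy⟩
      exact uniq v y (f v) hv hyw (fspec v).1 hvy (fspec v).2
    · intro u v huw hvw huv
      by_contra hcon
      push_neg at hcon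
      obtain ⟨hwu, hwv⟩ := hcon
      have hu1 : ∀ z, G.Adj u z → z = v := by
        intro z hz
        by_cases hzw : z = w
        · subst hzw; exact absurd hz.symm hwu
        · exact uniq u z v huw hzw hvw hz huv
      have hv1 : ∀ z, G.Adj v z → z = u := by
        intro z hz
        by_cases hzw : z = w
        · subst hzw; exact absurd hz.symm hwv
        · exact uniq v z u hvw hzw huw hz huv.symm
      obtain ⟨q⟩ := hG.preconnected u w
      rcases walk_two hu1 hv1 q (Or.inl rfl) with rfl | rfl
      · exact huw rfl
      · exact hvw rfl
  · -- reverse direction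
    rintro ⟨hodd, w, hmatch, hcover⟩
    set S : Finset V := Finset.univ.erase w with hSdef
    have hmemS : ∀ x : V, x ∈ S ↔ x ≠ w := by
      intro x; simp [hSdef]
    have hScard : S.card = n - 1 := by
      rw [hSdef, Finset.card_erase_of_mem (Finset.mem_univ w), Finset.card_univ]
    have hSTDS : IsTDS G S := by
      intro v
      by_cases hv : v = w
      · subst hv
        obtain ⟨u, hu⟩ := hadjall v
        exact ⟨u, (hmemS u).2 hu.ne', hu⟩
      · obtain ⟨u, ⟨huw, hadj⟩, _⟩ := hmatch v hv
        exact ⟨u, (hmemS u).2 huw, hadj⟩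
    have hSMin : ∀ T : Finset V, T ⊂ S → ¬ IsTDS G T := by
      intro T hT hTTDS
      obtain ⟨x, hxS, hxT⟩ := Finset.exists_of_ssubset hT
      have hxw : x ≠ w := (hmemS x).1 hxS
      obtain ⟨y, ⟨hyw, hxy⟩, _⟩ := hmatch x hxw
      obtain ⟨u₀, hu₀, huniq⟩ := hmatch y hyw
      have hxu₀ : x = u₀ := huniq x ⟨hxw, hxy.symm⟩
      obtain ⟨s, hsT, hys⟩ := hTTDS y
      have hsS : s ∈ S := hT.subset hsT
      have hsw : s ≠ w := (hmemS s).1 hsS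
      have : s = u₀ := huniq s ⟨hsw, hys⟩
      rw [← hxu₀] at this
      rw [this] at hsT
      exact hxT hsT
    have hSM : IsMTDS G S := ⟨hSTDS, hSMin⟩
    have hmemK : n - 1 ∈ {k | ∃ S : Finset V, IsMTDS G S ∧ S.card = k} :=
      ⟨S, hSM, hScard⟩
    have hbound : ∀ k ∈ {k | ∃ S : Finset V, IsMTDS G S ∧ S.card = k}, k ≤ n - 1 := by
      rintro k ⟨S', hS', rfl⟩
      have hle : S'.card ≤ n :=
        (Finset.card_le_card (Finset.subset_univ S')).trans (le_of_eq Finset.card_univ)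
      have hne : S'.card ≠ n := by
        intro hScard'
        have huniv : S' = Finset.univ := Finset.eq_univ_of_card S' (hScard'.trans Finset.card_univ.symm)
        have : S ⊂ S' := by
          rw [huniv, hSdef]
          exact Finset.erase_ssubset (Finset.mem_univ w)
        exact hS'.2 S this hSTDS
      omega
    exact le_antisymm (csSup_le hKne hbound) (le_csSup hKbdd hmemK)
end

section
/- If the set of stems of a connected graph G of order n ≥ 3 is a total dominating set of G, then it is the unique minimal total dominating set of G, and hence γ_t(G) = Γ_t(G) = σ(G). -/
open Finset

variable {V : Type*} [Fintype V] [DecidableEq V]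

/-- A leaf is a vertex of degree 1. -/
def IsLeaf (G : SimpleGraph V) (v : V) : Prop := (G.neighborSet v).ncard = 1

/-- A stem is a vertex adjacent to a leaf. -/
def IsStem (G : SimpleGraph V) (v : V) : Prop := ∃ u, IsLeaf G u ∧ G.Adj u v

open Classical in
/-- The set of stems of `G`. -/
noncomputable def stems (G : SimpleGraph V) : Finset V :=
  Finset.univ.filter (fun v => IsStem G v)

theorem stmt_9 (G : SimpleGraph V) (hG : G.Connected) (hn : 3 ≤ Fintype.card V)
    (h : IsTDS G (stems G)) :
    IsMTDS G (stems G) ∧ (∀ S : Finset V, IsMTDS G S → S = stems G) ∧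
      gammaT G = GammaT G ∧ GammaT G = (stems G).card := by
  -- every TDS contains all stems
  have hsub : ∀ {S : Finset V}, IsTDS G S → stems G ⊆ S := by
    intro S hS s hs
    simp only [stems, mem_filter] at hs
    obtain ⟨-, u, hu, hadj⟩ := hs
    obtain ⟨t, ht, hadjt⟩ := hS u
    obtain ⟨a, ha⟩ := Set.ncard_eq_one.mp hu
    have hs' : s ∈ G.neighborSet u := hadj
    have ht' : t ∈ G.neighborSet u := hadjt
    rw [ha, Set.mem_singleton_iff] at hs' ht'
    rw [hs', ← ht']; exact ht
  have hM : IsMTDS G (stems G) := by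
    refine ⟨h, fun T hT hTDS => ?_⟩
    exact hT.not_subset (hsub hTDS)
  have huniq : ∀ S : Finset V, IsMTDS G S → S = stems G := by
    intro S hS
    by_contra hne
    have hss : stems G ⊂ S := (hsub hS.1).ssubset_of_ne (Ne.symm hne)
    exact hS.2 (stems G) hss h
  have hG2 : GammaT G = (stems G).card := by
    have : {k | ∃ S : Finset V, IsMTDS G S ∧ S.card = k} = {(stems G).card} := by
      ext k
      constructor
      · rintro ⟨S, hS, rfl⟩
        simp [huniq S hS]
      · rintro rfl
        exact ⟨stems G, hM, rfl⟩
    rw [GammaT, this, csSup_singleton]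
  have hg : gammaT G = (stems G).card := by
    apply le_antisymm
    · exact Nat.sInf_le ⟨stems G, h, rfl⟩
    · have hmem : (stems G).card ∈ {k | ∃ S : Finset V, IsTDS G S ∧ S.card = k} :=
        ⟨stems G, h, rfl⟩
      apply le_csInf ⟨(stems G).card, hmem⟩
      rintro k ⟨S, hS, rfl⟩
      exact card_le_card (hsub hS)
  exact ⟨hM, huniq, hg.trans hG2.symm, hG2⟩
end

section
/- If G is a graph without isolated vertices, k ≥ Γ_t(G), and D_k^t(G) is connected, then D_{k+1}^t(G) is connected. -/
open Finset

variable {V : Type*} [Fintype V] [DecidableEq V]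

/-- The `k`-total dominating graph: vertices are total dominating sets of size at most `k`,
adjacent iff they differ by adding or deleting one vertex. -/
def TDGraph (G : SimpleGraph V) (k : ℕ) :
    SimpleGraph {S : Finset V // IsTDS G S ∧ S.card ≤ k} :=
  SimpleGraph.fromRel (fun A B => A.1 ⊆ B.1 ∧ B.1.card = A.1.card + 1)

lemma isTDS_mono {G : SimpleGraph V} {S T : Finset V} (h : S ⊆ T) (hS : IsTDS G S) :
    IsTDS G T := fun v => by obtain ⟨s, hs, ha⟩ := hS v; exact ⟨s, h hs, ha⟩

lemma exists_mtds {G : SimpleGraph V} :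
    ∀ S : Finset V, IsTDS G S → ∃ T ⊆ S, IsMTDS G T := by
  intro S
  induction S using Finset.strongInduction with
  | _ S ih =>
    intro hS
    by_cases hmin : ∀ T : Finset V, T ⊂ S → ¬ IsTDS G T
    · exact ⟨S, subset_rfl, hS, hmin⟩
    · push_neg at hmin
      obtain ⟨T, hTS, hT⟩ := hmin
      obtain ⟨U, hUT, hU⟩ := ih T hTS hT
      exact ⟨U, hUT.trans hTS.subset, hU⟩

lemma mtds_card_le {G : SimpleGraph V} {S : Finset V} (hS : IsMTDS G S) :
    S.card ≤ GammaT G := by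
  apply le_csSup
  · exact ⟨Fintype.card V, fun n ⟨T, _, hT⟩ => hT ▸ Finset.card_le_univ T⟩
  · exact ⟨S, hS, rfl⟩

lemma tdGraph_adj {G : SimpleGraph V} {k : ℕ}
    {A B : {S : Finset V // IsTDS G S ∧ S.card ≤ k}} :
    (TDGraph G k).Adj A B ↔ A ≠ B ∧
      ((A.1 ⊆ B.1 ∧ B.1.card = A.1.card + 1) ∨ (B.1 ⊆ A.1 ∧ A.1.card = B.1.card + 1)) :=
  SimpleGraph.fromRel_adj _ _ _

/-- Inclusion hom from `TDGraph G k` to `TDGraph G (k+1)`. -/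
def tdιHom (G : SimpleGraph V) (k : ℕ) : TDGraph G k →g TDGraph G (k + 1) where
  toFun := fun A => ⟨A.1, A.2.1, A.2.2.trans (Nat.le_succ k)⟩
  map_rel' := by
    intro A B hAB
    rw [tdGraph_adj] at hAB ⊢
    exact ⟨fun e => hAB.1 (Subtype.ext (Subtype.mk_eq_mk.mp e)), hAB.2⟩

theorem stmt_10 (G : SimpleGraph V) (hG : ∀ v : V, ∃ u, G.Adj v u) (k : ℕ)
    (hk : GammaT G ≤ k) (h : (TDGraph G k).Connected) :
    (TDGraph G (k + 1)).Connected := by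
  set ι := tdιHom G k with hι
  have key : ∀ A : {S : Finset V // IsTDS G S ∧ S.card ≤ k + 1},
      ∃ A' : {S : Finset V // IsTDS G S ∧ S.card ≤ k},
        (TDGraph G (k + 1)).Reachable A (ι A') := by
    intro A
    by_cases hc : A.1.card ≤ k
    · exact ⟨⟨A.1, A.2.1, hc⟩, by exact SimpleGraph.Reachable.refl _⟩
    · -- A.1.card = k + 1
      obtain ⟨T, hTA, hT⟩ := exists_mtds A.1 A.2.1
      have hTlt : T ⊂ A.1 := by
        refine lt_of_le_of_ne hTA fun e => ?_
        have := mtds_card_le hT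
        rw [e] at this
        omega
      obtain ⟨v, hvA, hvT⟩ := Finset.exists_of_ssubset hTlt
      have hTDS : IsTDS G (A.1.erase v) :=
        isTDS_mono (fun x hx => Finset.mem_erase.2 ⟨fun e => hvT (e ▸ hx), hTA hx⟩) hT.1
      have hcard : (A.1.erase v).card + 1 = A.1.card := by
        rw [Finset.card_erase_of_mem hvA]
        have := A.2.2
        omega
      refine ⟨⟨A.1.erase v, hTDS, by omega⟩, SimpleGraph.Adj.reachable ?_⟩
      rw [tdGraph_adj]
      refine ⟨fun e => ?_, Or.inr ⟨Finset.erase_subset _ _, hcard.symm⟩⟩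
      have : A.1 = A.1.erase v := congrArg Subtype.val e
      exact absurd (this ▸ hvA) (Finset.notMem_erase v A.1)
  obtain ⟨A₀⟩ := h.nonempty
  have : Nonempty {S : Finset V // IsTDS G S ∧ S.card ≤ k + 1} := ⟨ι A₀⟩
  refine SimpleGraph.Connected.mk fun A B => ?_
  obtain ⟨A', hA⟩ := key A
  obtain ⟨B', hB⟩ := key B
  exact hA.trans (((h.preconnected A' B').map ι).trans hB.symm)
end

section
/- For n ≥ 3, the total domination number of the cycle C_n (and of the path P_n) equals n/2 + 1 if n ≡ 2 (mod 4), and ⌈n/2⌉ otherwise. -/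
open Finset

variable {V : Type*} [Fintype V] [DecidableEq V]

lemma cnt_base (n : ℕ) : ((range n).filter (fun i => i % 4 = 1 ∨ i % 4 = 2)).card
    = 2 * (n / 4) + (if n % 4 = 2 then 1 else if n % 4 = 3 then 2 else 0) := by
  induction n using Nat.strong_induction_on with
  | _ n ih =>
    match n, ih with
    | 0, _ => decide
    | 1, _ => decide
    | 2, _ => decide
    | 3, _ => decide
    | (m+4), ih =>
      have h := ih m (by omega)
      rw [Finset.card_filter] at h ⊢
      rw [Finset.sum_range_succ, Finset.sum_range_succ, Finset.sum_range_succ,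
        Finset.sum_range_succ, h]
      split_ifs <;> omega

def tdsP (n i : ℕ) : Prop :=
  i % 4 = 1 ∨ i % 4 = 2 ∨ ((n % 4 = 1 ∨ n % 4 = 2) ∧ i + 2 = n)

instance (n i : ℕ) : Decidable (tdsP n i) := by unfold tdsP; infer_instance

lemma cnt_tds (n : ℕ) (hn : 3 ≤ n) : ((range n).filter (tdsP n)).card
    = if n % 4 = 2 then n / 2 + 1 else (n + 1) / 2 := by
  by_cases h : n % 4 = 1 ∨ n % 4 = 2
  · have hext : (range n).filter (tdsP n)
        = insert (n - 2) ((range n).filter (fun i => i % 4 = 1 ∨ i % 4 = 2)) := by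
      ext i
      simp only [mem_insert, mem_filter, mem_range, tdsP]
      omega
    rw [hext, Finset.card_insert_of_notMem (by simp only [mem_filter, mem_range]; omega),
      cnt_base]
    split_ifs <;> omega
  · have hext : (range n).filter (tdsP n)
        = (range n).filter (fun i => i % 4 = 1 ∨ i % 4 = 2) := by
      apply Finset.filter_congr
      intro i _
      simp only [tdsP, eq_iff_iff]
      constructor
      · rintro (h1 | h1 | h1) <;> omega
      · rintro (h1 | h1) <;> omega
    rw [hext, cnt_base]
    split_ifs <;> omega

def tdsS (n : ℕ) : Finset (Fin n) := univ.filter (fun v => tdsP n v.val)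

lemma tdsS_card_eq (n : ℕ) : (tdsS n).card = ((range n).filter (tdsP n)).card := by
  rw [tdsS, Finset.card_filter, Finset.card_filter, ← Fin.sum_univ_eq_sum_range]

lemma tdsS_path (n : ℕ) (hn : 3 ≤ n) : ∀ v : Fin n, ∃ s ∈ tdsS n, (SimpleGraph.pathGraph n).Adj v s := by
  rintro ⟨i, hi⟩
  have key : ∃ j, j < n ∧ tdsP n j ∧ (i + 1 = j ∨ j + 1 = i) := by
    by_cases h1 : i % 4 = 0 ∨ i % 4 = 1
    · by_cases h2 : i + 1 = n
      · exact ⟨n - 2, by omega, by unfold tdsP; omega, by omega⟩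
      · exact ⟨i + 1, by omega, by unfold tdsP; omega, by omega⟩
    · exact ⟨i - 1, by omega, by unfold tdsP; omega, by omega⟩
  obtain ⟨j, hj, hp, hadj⟩ := key
  refine ⟨⟨j, hj⟩, ?_, ?_⟩
  · exact Finset.mem_filter.mpr ⟨mem_univ _, hp⟩
  · rw [SimpleGraph.pathGraph_adj]
    exact hadj


lemma path_adj_cycle {n : ℕ} (hn : 3 ≤ n) {u v : Fin n}
    (h : (SimpleGraph.pathGraph n).Adj u v) : (SimpleGraph.cycleGraph n).Adj u v := by
  obtain ⟨m, rfl⟩ : ∃ m, n = m + 2 := ⟨n - 2, by omega⟩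
  rw [SimpleGraph.pathGraph_adj] at h
  rw [SimpleGraph.cycleGraph_adj]
  rcases h with h | h
  · right
    have hv : v = u + 1 := by
      apply Fin.ext
      rw [Fin.val_add, Fin.val_one, Nat.mod_eq_of_lt (by omega)]
      omega
    rw [hv]
    exact add_sub_cancel_left u 1
  · left
    have hv : u = v + 1 := by
      apply Fin.ext
      rw [Fin.val_add, Fin.val_one, Nat.mod_eq_of_lt (by omega)]
      omega
    rw [hv]
    exact add_sub_cancel_left v 1


open Fin.CommRing in
lemma cycle_lower {n : ℕ} (hn : 3 ≤ n) (S : Finset (Fin n))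
    (hS : ∀ v : Fin n, ∃ s ∈ S, (SimpleGraph.cycleGraph n).Adj v s) :
    n ≤ 2 * S.card ∧ (n % 4 = 2 → n + 1 ≤ 2 * S.card) := by
  haveI : NeZero n := ⟨by omega⟩
  set x : Fin n → ℕ := fun v => if v ∈ S then 1 else 0 with hx
  have hxle : ∀ v, x v ≤ 1 := by intro v; simp only [hx]; split <;> omega
  -- each vertex dominated
  have hdom : ∀ v : Fin n, 1 ≤ x (v - 1) + x (v + 1) := by
    intro v
    obtain ⟨s, hs, hadj⟩ := hS v
    rw [SimpleGraph.cycleGraph_adj'] at hadj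
    have h1 : ((1 : Fin n)).val = 1 := by
      rw [Fin.val_one']
      exact Nat.mod_eq_of_lt (by omega)
    rcases hadj with h | h
    · have : v - s = 1 := Fin.ext (by rw [h1]; exact h)
      have hsv : s = v - 1 := by rw [← this, sub_sub_cancel]
      have : x (v - 1) = 1 := by rw [← hsv]; simp [hx, hs]
      omega
    · have : s - v = 1 := Fin.ext (by rw [h1]; exact h)
      have hsv : s = v + 1 := by rw [← this]; ring
      have : x (v + 1) = 1 := by rw [← hsv]; simp [hx, hs]
      omega
  -- sum identity
  have hsumx : ∑ v : Fin n, x v = S.card := by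
    rw [Finset.card_eq_sum_ones]
    rw [← Finset.sum_filter]
    congr 1
    simp
  have hshift1 : ∑ v : Fin n, x (v - 1) = S.card := by
    rw [← hsumx]
    exact Fintype.sum_equiv (Equiv.subRight (1 : Fin n)) _ _ (fun v => rfl)
  have hshift2 : ∑ v : Fin n, x (v + 1) = S.card := by
    rw [← hsumx]
    exact Fintype.sum_equiv (Equiv.addRight (1 : Fin n)) _ _ (fun v => rfl)
  have hsum2 : ∑ v : Fin n, (x (v - 1) + x (v + 1)) = 2 * S.card := by
    rw [Finset.sum_add_distrib, hshift1, hshift2]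
    ring
  have hlow : n ≤ 2 * S.card := by
    calc n = ∑ _v : Fin n, 1 := by simp
    _ ≤ ∑ v : Fin n, (x (v - 1) + x (v + 1)) := Finset.sum_le_sum (fun v _ => hdom v)
    _ = 2 * S.card := hsum2
  refine ⟨hlow, fun h4 => ?_⟩
  by_contra hcon
  have hcard : 2 * S.card = n := by omega
  have heq : ∀ v : Fin n, x (v - 1) + x (v + 1) = 1 := by
    have := (Finset.sum_eq_sum_iff_of_le (s := (univ : Finset (Fin n)))
      (f := fun _ => 1) (g := fun v => x (v - 1) + x (v + 1))
      (fun v _ => hdom v)).mp (by rw [hsum2, hcard]; simp)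
    intro v
    exact (this v (mem_univ v)).symm
  set y : ℕ → ℕ := fun i => x ((i : ℕ) : Fin n) with hy
  have hrec : ∀ i : ℕ, y i + y (i + 2) = 1 := by
    intro i
    have h1 := heq ((i : Fin n) + 1)
    have e1 : ((i : Fin n) + 1) - 1 = ((i : ℕ) : Fin n) := by ring
    have e2 : ((i : Fin n) + 1) + 1 = (((i + 2 : ℕ)) : Fin n) := by push_cast; ring
    rw [e1, e2] at h1
    exact h1
  have hyle : ∀ i, y i ≤ 1 := fun i => hxle _
  have hind : ∀ k : ℕ, y (2 * k) = if k % 2 = 0 then y 0 else 1 - y 0 := by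
    intro k
    induction k with
    | zero => simp
    | succ k ih =>
      have h1 := hrec (2 * k)
      have h2 := hrec 0
      have e : 2 * (k + 1) = 2 * k + 2 := by ring
      rw [e]
      split_ifs at ih ⊢ <;> omega
  have hyn : y n = y 0 := by
    simp only [hy, Fin.natCast_self, Nat.cast_zero]
  have hk := hind (n / 2)
  have he : 2 * (n / 2) = n := by omega
  have hodd : (n / 2) % 2 = 1 := by omega
  rw [he, hyn, hodd] at hk
  have := hrec 0
  simp at hk
  omega


lemma path_lower {n : ℕ} (hn : 3 ≤ n) (S : Finset (Fin n))
    (hS : ∀ v : Fin n, ∃ s ∈ S, (SimpleGraph.pathGraph n).Adj v s) :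
    n ≤ 2 * S.card ∧ (n % 4 = 2 → n + 1 ≤ 2 * S.card) := by
  set x : Fin n → ℕ := fun v => if v ∈ S then 1 else 0 with hx
  set y : ℕ → ℕ := fun i => if h : i < n then x ⟨i, h⟩ else 0 with hy
  have hyle : ∀ i, y i ≤ 1 := by
    intro i; simp only [hy, hx]; split
    · split <;> omega
    · omega
  have hyzero : ∀ i, n ≤ i → y i = 0 := by
    intro i hi; simp only [hy]; rw [dif_neg (by omega)]
  set c : ℕ → ℕ := fun i => (if i = 0 then 0 else y (i - 1)) + y (i + 1) with hc
  have hdom : ∀ i, i < n → 1 ≤ c i := by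
    intro i hi
    obtain ⟨s, hs, hadj⟩ := hS ⟨i, hi⟩
    rw [SimpleGraph.pathGraph_adj] at hadj
    have hvv : ((⟨i, hi⟩ : Fin n)).val = i := rfl
    rw [hvv] at hadj
    have hxs : x s = 1 := by simp [hx, hs]
    simp only [hc]
    rcases hadj with h | h
    · -- i + 1 = s.val
      have : y (i + 1) = 1 := by
        simp only [hy]
        rw [dif_pos (h ▸ s.isLt)]
        rw [show (⟨i + 1, h ▸ s.isLt⟩ : Fin n) = s from Fin.ext h]
        exact hxs
      omega
    · -- s.val + 1 = i
      have hi0 : i ≠ 0 := by omega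
      have : y (i - 1) = 1 := by
        simp only [hy]
        have hlt : i - 1 < n := by omega
        rw [dif_pos hlt]
        rw [show (⟨i - 1, hlt⟩ : Fin n) = s from Fin.ext (by simp; omega)]
        exact hxs
      rw [if_neg hi0]
      omega
  have hsumy : ∑ i ∈ range n, y i = S.card := by
    have h1 : ∀ v : Fin n, y v.val = x v := by
      intro v
      simp only [hy]
      rw [dif_pos v.isLt]
    calc ∑ i ∈ range n, y i = ∑ v : Fin n, y v.val := (Fin.sum_univ_eq_sum_range y n).symm
    _ = ∑ v : Fin n, x v := by exact Finset.sum_congr rfl (fun v _ => h1 v)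
    _ = S.card := by
        rw [Finset.card_eq_sum_ones, ← Finset.sum_filter]
        congr 1
        simp
  obtain ⟨m, rfl⟩ : ∃ m, n = m + 1 := ⟨n - 1, by omega⟩
  have hsumc : (∑ i ∈ range (m + 1), c i) + y 0 + y m = 2 * S.card := by
    have hA : ∑ i ∈ range (m + 1), (if i = 0 then 0 else y (i - 1)) = ∑ i ∈ range m, y i := by
      rw [Finset.sum_range_succ']
      simp
    have hB : (∑ i ∈ range (m + 1), y (i + 1)) + y 0 = ∑ i ∈ range (m + 1), y i := by
      have := Finset.sum_range_succ' y (m + 1)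
      rw [Finset.sum_range_succ y (m + 1)] at this
      rw [hyzero (m + 1) (by omega)] at this
      omega
    have hcsplit : ∑ i ∈ range (m + 1), c i
        = (∑ i ∈ range (m + 1), (if i = 0 then 0 else y (i - 1)))
          + ∑ i ∈ range (m + 1), y (i + 1) := by
      rw [← Finset.sum_add_distrib]
    have hAm : (∑ i ∈ range m, y i) + y m = ∑ i ∈ range (m + 1), y i :=
      (Finset.sum_range_succ y m).symm
    rw [hcsplit, hA]
    rw [← hsumy]
    omega
  have hlowc : m + 1 ≤ ∑ i ∈ range (m + 1), c i := by
    calc m + 1 = ∑ _i ∈ range (m + 1), 1 := by simp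
    _ ≤ ∑ i ∈ range (m + 1), c i :=
        Finset.sum_le_sum (fun i hi => hdom i (Finset.mem_range.mp hi))
  refine ⟨by omega, fun h4 => ?_⟩
  by_contra hcon
  have hy0 : y 0 = 0 := by omega
  have hym : y m = 0 := by omega
  have hceq : ∀ i < m + 1, c i = 1 := by
    have hsum1 : ∑ i ∈ range (m + 1), c i = ∑ _i ∈ range (m + 1), 1 := by
      simp only [Finset.sum_const, Finset.card_range, smul_eq_mul, mul_one]
      omega
    have := (Finset.sum_eq_sum_iff_of_le (s := range (m + 1))
      (f := fun _ => 1) (g := c)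
      (fun i hi => hdom i (Finset.mem_range.mp hi))).mp hsum1.symm
    intro i hi
    exact (this i (Finset.mem_range.mpr hi)).symm
  have hrec : ∀ i, i + 1 < m + 1 → y i + y (i + 2) = 1 := by
    intro i hi
    have := hceq (i + 1) (by omega)
    simp only [hc, if_neg (Nat.succ_ne_zero i), Nat.add_sub_cancel] at this
    exact this
  have hind : ∀ k, 2 * k ≤ m - 1 → y (2 * k) = k % 2 := by
    intro k
    induction k with
    | zero => intro _; simpa using hy0
    | succ k ih =>
      intro hk
      have h1 := hrec (2 * k) (by omega)
      have h2 := ih (by omega)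
      have h3 := hyle (2 * k + 2)
      have e : 2 * (k + 1) = 2 * k + 2 := by ring
      rw [e]
      omega
  -- n = m + 1, n % 4 = 2, so m ≥ 5 and m - 1 = n - 2 even
  have hfin := hind ((m - 1) / 2) (by omega)
  have he : 2 * ((m - 1) / 2) = m - 1 := by omega
  have hpar : ((m - 1) / 2) % 2 = 0 := by omega
  rw [he, hpar] at hfin
  -- c m = y (m - 1) + y (m + 1) = 1
  have hcm := hceq m (by omega)
  simp only [hc, if_neg (by omega : ¬ m = 0)] at hcm
  rw [hyzero (m + 1) (by omega)] at hcm
  omega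

theorem stmt_13 (n : ℕ) (hn : 3 ≤ n) :
    gammaT (SimpleGraph.cycleGraph n) =
      (if n % 4 = 2 then n / 2 + 1 else (n + 1) / 2) ∧
    gammaT (SimpleGraph.pathGraph n) =
      (if n % 4 = 2 then n / 2 + 1 else (n + 1) / 2) := by
  set t : ℕ := if n % 4 = 2 then n / 2 + 1 else (n + 1) / 2 with ht
  have hcard : (tdsS n).card = t := by rw [tdsS_card_eq, cnt_tds n hn]
  have hpath : IsTDS (SimpleGraph.pathGraph n) (tdsS n) := tdsS_path n hn
  have hcycle : IsTDS (SimpleGraph.cycleGraph n) (tdsS n) := by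
    intro v
    obtain ⟨s, hs, hadj⟩ := hpath v
    exact ⟨s, hs, path_adj_cycle hn hadj⟩
  have hmemC : t ∈ {k | ∃ S : Finset (Fin n), IsTDS (SimpleGraph.cycleGraph n) S ∧ S.card = k} :=
    ⟨tdsS n, hcycle, hcard⟩
  have hmemP : t ∈ {k | ∃ S : Finset (Fin n), IsTDS (SimpleGraph.pathGraph n) S ∧ S.card = k} :=
    ⟨tdsS n, hpath, hcard⟩
  constructor
  · refine le_antisymm (Nat.sInf_le hmemC) (le_csInf ⟨t, hmemC⟩ ?_)
    rintro k ⟨S, hS, rfl⟩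
    obtain ⟨h1, h2⟩ := cycle_lower hn S hS
    by_cases h4 : n % 4 = 2
    · have := h2 h4
      rw [ht, if_pos h4]
      omega
    · rw [ht, if_neg h4]
      omega
  · refine le_antisymm (Nat.sInf_le hmemP) (le_csInf ⟨t, hmemP⟩ ?_)
    rintro k ⟨S, hS, rfl⟩
    obtain ⟨h1, h2⟩ := path_lower hn S hS
    by_cases h4 : n % 4 = 2
    · have := h2 h4
      rw [ht, if_pos h4]
      omega
    · rw [ht, if_neg h4]
      omega
end

section
/- For any n ≥ 2, the upper total domination number of the path P_n equals 2⌊(n+1)/3⌋. -/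
open Finset

variable {V : Type*} [Fintype V] [DecidableEq V]

open Finset

/-- adjacency on ℕ (path) -/
def adj1 (u v : ℕ) : Prop := u = v + 1 ∨ v = u + 1

/-- relaxed minimal-TDS structure on window [a, a+m) -/
def Hh (a m : ℕ) (S : Finset ℕ) : Prop :=
  (∀ s ∈ S, a ≤ s ∧ s < a + m) ∧
  (∀ v, a < v → v < a + m → ∃ u ∈ S, adj1 u v) ∧
  (∀ s ∈ S, ∃ v, a ≤ v ∧ v < a + m ∧ adj1 v s ∧ ∀ u ∈ S, adj1 v u → u = s)

lemma cut_lemma (m a k c : ℕ) (S : Finset ℕ)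
    (IH : ∀ m' < m, ∀ a' S', Hh a' m' S' → S'.card ≤ 2 * ((m' + 1) / 3))
    (h : Hh a m S) (hk1 : 1 ≤ k) (hkm : k ≤ m + 1)
    (hj : (S.filter (fun x => x < a + k)).card ≤ c)
    (hsafe : a + k ∉ S ∨ ∃ u ∈ S, u + 2 = a + k)
    (harith : c + 2 * ((m - k + 1) / 3) ≤ 2 * ((m + 1) / 3)) :
    S.card ≤ 2 * ((m + 1) / 3) := by
  obtain ⟨h1, h2, h3⟩ := h
  by_cases hkm' : k ≤ m
  · set T := S.filter (fun x => ¬ x < a + k) with hT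
    have hTsub : ∀ x ∈ T, x ∈ S ∧ a + k ≤ x := by
      intro x hx
      rw [hT, Finset.mem_filter] at hx
      exact ⟨hx.1, by omega⟩
    have hHT : Hh (a + k) (m - k) T := by
      refine ⟨?_, ?_, ?_⟩
      · intro s hs
        obtain ⟨hsS, hsk⟩ := hTsub s hs
        have := h1 s hsS
        omega
      · intro v hv1 hv2
        obtain ⟨u, huS, hadj⟩ := h2 v (by omega) (by omega)
        refine ⟨u, ?_, hadj⟩
        rw [hT, Finset.mem_filter]
        rcases hadj with h' | h' <;> exact ⟨huS, by omega⟩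
      · intro s hs
        obtain ⟨hsS, hsk⟩ := hTsub s hs
        obtain ⟨v, hv1, hv2, hadj, huniq⟩ := h3 s hsS
        have hvk : a + k ≤ v := by
          by_contra hvlt
          -- then v = a+k-1 and s = a+k
          have hs' : s = v + 1 := by rcases hadj with h' | h' <;> omega
          have hsak : s = a + k := by omega
          rcases hsafe with hns | ⟨u, huS, hu2⟩
          · exact hns (hsak ▸ hsS)
          · have : u = s := huniq u huS (by left; omega)
            omega
        refine ⟨v, hvk, by omega, hadj, ?_⟩
        intro u huT
        exact huniq u (hTsub u huT).1
    have hcardT : T.card ≤ 2 * ((m - k + 1) / 3) := by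
      have := IH (m - k) (by omega) (a + k) T hHT
      exact this
    have hsplit := Finset.card_filter_add_card_filter_not
      (s := S) (p := fun x => x < a + k)
    have hTc : (S.filter (fun x => ¬ x < a + k)).card = T.card := rfl
    omega
  · -- k = m + 1 : whole set is the prefix
    have : S.filter (fun x => x < a + k) = S := by
      apply Finset.filter_true_of_mem
      intro x hx
      have := h1 x hx
      omega
    rw [this] at hj
    omega
lemma Hh_card : ∀ m a S, Hh a m S → S.card ≤ 2 * ((m + 1) / 3) := by
  intro m
  induction m using Nat.strong_induction_on with
  | _ m IH =>
  intro a S h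
  obtain ⟨h1, h2, h3⟩ := h
  by_cases hm2 : m ≤ 2
  · interval_cases m
    · have : S = ∅ := Finset.eq_empty_of_forall_notMem
        (fun s hs => by have := h1 s hs; omega)
      simp [this]
    · have : S = ∅ := Finset.eq_empty_of_forall_notMem (fun s hs => by
        obtain ⟨v, hv1, hv2, hadj, _⟩ := h3 s hs
        have := h1 s hs
        rcases hadj with h' | h' <;> omega)
      simp [this]
    · have hsub : S ⊆ {a, a + 1} := by
        intro x hx
        have := h1 x hx
        simp only [Finset.mem_insert, Finset.mem_singleton]
        omega
      have := Finset.card_le_card hsub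
      have h2' : ({a, a + 1} : Finset ℕ).card ≤ 2 :=
        le_trans (Finset.card_insert_le _ _) (by simp)
      omega
  · -- m ≥ 3
    have hm3 : 3 ≤ m := by omega
    -- helper to invoke the cut
    have docut : ∀ k c : ℕ, 1 ≤ k → k ≤ m + 1 →
        (S.filter (fun x => x < a + k)).card ≤ c →
        (a + k ∉ S ∨ ∃ u ∈ S, u + 2 = a + k) →
        (c + 2 * ((m - k + 1) / 3) ≤ 2 * ((m + 1) / 3)) →
        S.card ≤ 2 * ((m + 1) / 3) := by
      intro k c hk1 hkm hj hsafe harith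
      exact cut_lemma m a k c S IH ⟨h1, h2, h3⟩ hk1 hkm hj hsafe harith
    by_cases h0 : a ∈ S
    · by_cases hA1 : a + 1 ∈ S
      · by_cases hA2 : a + 2 ∈ S
        · -- case A : 111 contra via private of a
          exfalso
          obtain ⟨v, hv1, hv2, hadj, huniq⟩ := h3 a h0
          have hv : v = a + 1 := by rcases hadj with h' | h' <;> omega
          have := huniq (a + 2) hA2 (by subst hv; right; omega)
          omega
        · -- case B : 110 cut 3
          apply docut 3 2 (by omega) (by omega) ?_ (Or.inr ⟨a + 1, hA1, by omega⟩)
            (by omega)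
          have hsub : S.filter (fun x => x < a + 3) ⊆ {a, a + 1} := by
            intro x hx
            rw [Finset.mem_filter] at hx
            have hb := h1 x hx.1
            have hx2 : x ≠ a + 2 := fun e => hA2 (e ▸ hx.1)
            simp only [Finset.mem_insert, Finset.mem_singleton]
            omega
          refine le_trans (Finset.card_le_card hsub) ?_
          exact le_trans (Finset.card_insert_le _ _) (by simp)
      · by_cases hA2 : a + 2 ∈ S
        · -- case C : 101 contra via private of a
          exfalso
          obtain ⟨v, hv1, hv2, hadj, huniq⟩ := h3 a h0
          have hv : v = a + 1 := by rcases hadj with h' | h' <;> omega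
          have := huniq (a + 2) hA2 (by subst hv; right; omega)
          omega
        · -- case D : 100 , forced a+3, a+4 ∈ S, cut 6
          obtain ⟨u, huS, hadj⟩ := h2 (a + 2) (by omega) (by omega)
          have hA3 : a + 3 ∈ S := by
            have : u = a + 1 ∨ u = a + 3 := by rcases hadj with h' | h' <;> omega
            rcases this with h' | h'
            · exact absurd (h' ▸ huS) hA1
            · exact h' ▸ huS
          obtain ⟨u', huS', hadj'⟩ := h2 (a + 3) (by omega) (by have := h1 _ hA3; omega)
          have hA4 : a + 4 ∈ S := by
            have : u' = a + 2 ∨ u' = a + 4 := by rcases hadj' with h' | h' <;> omega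
            rcases this with h' | h'
            · exact absurd (h' ▸ huS') hA2
            · exact h' ▸ huS'
          have hm5 : 5 ≤ m := by have := h1 _ hA4; omega
          apply docut 6 4 (by omega) (by omega) ?_ (Or.inr ⟨a + 4, hA4, by omega⟩)
            (by omega)
          have hsub : S.filter (fun x => x < a + 6) ⊆ {a, a + 3, a + 4, a + 5} := by
            intro x hx
            rw [Finset.mem_filter] at hx
            have hb := h1 x hx.1
            have e1 : x ≠ a + 1 := fun e => hA1 (e ▸ hx.1)
            have e2 : x ≠ a + 2 := fun e => hA2 (e ▸ hx.1)
            simp only [Finset.mem_insert, Finset.mem_singleton]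
            omega
          refine le_trans (Finset.card_le_card hsub) ?_
          refine le_trans (Finset.card_insert_le _ _) ?_
          refine le_trans (Nat.add_le_add_right (Finset.card_insert_le _ _) 1) ?_
          refine le_trans (Nat.add_le_add_right
            (Nat.add_le_add_right (Finset.card_insert_le _ _) 1) 1) ?_
          simp
    · by_cases hA1 : a + 1 ∈ S
      · by_cases hA2 : a + 2 ∈ S
        · by_cases hA3 : a + 3 ∈ S
          · -- cases F/G : 0111...
            obtain ⟨v, hv1, hv2, hadj, huniq⟩ := h3 (a + 3) hA3
            have hv : v = a + 2 ∨ v = a + 4 := by rcases hadj with h' | h' <;> omega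
            have hv4 : v = a + 4 := by
              rcases hv with h' | h'
              · exfalso
                have := huniq (a + 1) hA1 (by subst h'; left; omega)
                omega
              · exact h'
            subst hv4
            have hm5 : 5 ≤ m := by omega
            have hA5 : a + 5 ∉ S := fun hh => by
              have := huniq (a + 5) hh (by right; omega)
              omega
            by_cases hA4 : a + 4 ∈ S
            · -- case F : 01111 , a+6 ∉ S, cut 6
              obtain ⟨w, hw1, hw2, hadjw, huniqw⟩ := h3 (a + 4) hA4
              have hw : w = a + 3 ∨ w = a + 5 := by rcases hadjw with h' | h' <;> omega
              have hw5 : w = a + 5 := by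
                rcases hw with h' | h'
                · exfalso
                  have := huniqw (a + 2) hA2 (by subst h'; left; omega)
                  omega
                · exact h'
              subst hw5
              have hA6 : a + 6 ∉ S := fun hh => by
                have := huniqw (a + 6) hh (by right; omega)
                omega
              apply docut 6 4 (by omega) (by omega) ?_ (Or.inl hA6) (by omega)
              have hsub : S.filter (fun x => x < a + 6) ⊆
                  {a + 1, a + 2, a + 3, a + 4} := by
                intro x hx
                rw [Finset.mem_filter] at hx
                have hb := h1 x hx.1
                have e0 : x ≠ a := fun e => h0 (e ▸ hx.1)
                have e5 : x ≠ a + 5 := fun e => hA5 (e ▸ hx.1)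
                simp only [Finset.mem_insert, Finset.mem_singleton]
                omega
              refine le_trans (Finset.card_le_card hsub) ?_
              refine le_trans (Finset.card_insert_le _ _) ?_
              refine le_trans (Nat.add_le_add_right (Finset.card_insert_le _ _) 1) ?_
              refine le_trans (Nat.add_le_add_right
                (Nat.add_le_add_right (Finset.card_insert_le _ _) 1) 1) ?_
              simp
            · by_cases hA6 : a + 6 ∈ S
              · -- case G2 : 0111001 , forced a+7 ∈ S, cut 9
                obtain ⟨u, huS, hadj'⟩ := h2 (a + 6) (by omega) (by have := h1 _ hA6; omega)
                have hA7 : a + 7 ∈ S := by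
                  have : u = a + 5 ∨ u = a + 7 := by rcases hadj' with h' | h' <;> omega
                  rcases this with h' | h'
                  · exact absurd (h' ▸ huS) hA5
                  · exact h' ▸ huS
                have hm8 : 8 ≤ m := by have := h1 _ hA7; omega
                apply docut 9 6 (by omega) (by omega) ?_
                  (Or.inr ⟨a + 7, hA7, by omega⟩) (by omega)
                have hsub : S.filter (fun x => x < a + 9) ⊆
                    {a + 1, a + 2, a + 3, a + 6, a + 7, a + 8} := by
                  intro x hx
                  rw [Finset.mem_filter] at hx
                  have hb := h1 x hx.1
                  have e0 : x ≠ a := fun e => h0 (e ▸ hx.1)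
                  have e4 : x ≠ a + 4 := fun e => hA4 (e ▸ hx.1)
                  have e5 : x ≠ a + 5 := fun e => hA5 (e ▸ hx.1)
                  simp only [Finset.mem_insert, Finset.mem_singleton]
                  omega
                refine le_trans (Finset.card_le_card hsub) ?_
                refine le_trans (Finset.card_insert_le _ _) ?_
                refine le_trans (Nat.add_le_add_right (Finset.card_insert_le _ _) 1) ?_
                refine le_trans (Nat.add_le_add_right
                  (Nat.add_le_add_right (Finset.card_insert_le _ _) 1) 1) ?_
                refine le_trans (Nat.add_le_add_right (Nat.add_le_add_right
                  (Nat.add_le_add_right (Finset.card_insert_le _ _) 1) 1) 1) ?_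
                refine le_trans (Nat.add_le_add_right (Nat.add_le_add_right
                  (Nat.add_le_add_right
                    (Nat.add_le_add_right (Finset.card_insert_le _ _) 1) 1) 1) 1) ?_
                simp
              · -- case G1 : 011100 0 , cut 6
                apply docut 6 3 (by omega) (by omega) ?_ (Or.inl hA6) (by omega)
                have hsub : S.filter (fun x => x < a + 6) ⊆
                    {a + 1, a + 2, a + 3} := by
                  intro x hx
                  rw [Finset.mem_filter] at hx
                  have hb := h1 x hx.1
                  have e0 : x ≠ a := fun e => h0 (e ▸ hx.1)
                  have e4 : x ≠ a + 4 := fun e => hA4 (e ▸ hx.1)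
                  have e5 : x ≠ a + 5 := fun e => hA5 (e ▸ hx.1)
                  simp only [Finset.mem_insert, Finset.mem_singleton]
                  omega
                refine le_trans (Finset.card_le_card hsub) ?_
                refine le_trans (Finset.card_insert_le _ _) ?_
                refine le_trans (Nat.add_le_add_right (Finset.card_insert_le _ _) 1) ?_
                simp
          · -- case E : 0110 cut 4
            apply docut 4 2 (by omega) (by have := h1 _ hA2; omega) ?_
              (Or.inr ⟨a + 2, hA2, by omega⟩) (by omega)
            have hsub : S.filter (fun x => x < a + 4) ⊆ {a + 1, a + 2} := by
              intro x hx
              rw [Finset.mem_filter] at hx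
              have hb := h1 x hx.1
              have e0 : x ≠ a := fun e => h0 (e ▸ hx.1)
              have e3 : x ≠ a + 3 := fun e => hA3 (e ▸ hx.1)
              simp only [Finset.mem_insert, Finset.mem_singleton]
              omega
            refine le_trans (Finset.card_le_card hsub) ?_
            exact le_trans (Finset.card_insert_le _ _) (by simp)
        · -- case H : 010 contra via domination of a+1
          exfalso
          obtain ⟨u, huS, hadj⟩ := h2 (a + 1) (by omega) (by omega)
          have : u = a ∨ u = a + 2 := by rcases hadj with h' | h' <;> omega
          rcases this with h' | h'
          · exact h0 (h' ▸ huS)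
          · exact hA2 (h' ▸ huS)
      · -- case I : 00 forced a+2, a+3 ∈ S
        obtain ⟨u, huS, hadj⟩ := h2 (a + 1) (by omega) (by omega)
        have hA2 : a + 2 ∈ S := by
          have : u = a ∨ u = a + 2 := by rcases hadj with h' | h' <;> omega
          rcases this with h' | h'
          · exact absurd (h' ▸ huS) h0
          · exact h' ▸ huS
        obtain ⟨u', huS', hadj'⟩ := h2 (a + 2) (by omega) (by omega)
        have hA3 : a + 3 ∈ S := by
          have : u' = a + 1 ∨ u' = a + 3 := by rcases hadj' with h' | h' <;> omega
          rcases this with h' | h'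
          · exact absurd (h' ▸ huS') hA1
          · exact h' ▸ huS'
        by_cases hA4 : a + 4 ∈ S
        · -- case I2 : 00111 , a+6 ∉ S, cut 6
          obtain ⟨v, hv1, hv2, hadj2, huniq⟩ := h3 (a + 4) hA4
          have hv : v = a + 3 ∨ v = a + 5 := by rcases hadj2 with h' | h' <;> omega
          have hv5 : v = a + 5 := by
            rcases hv with h' | h'
            · exfalso
              have := huniq (a + 2) hA2 (by subst h'; left; omega)
              omega
            · exact h'
          subst hv5
          have hA6 : a + 6 ∉ S := fun hh => by
            have := huniq (a + 6) hh (by right; omega)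
            omega
          have hm5 : 5 ≤ m := by omega
          apply docut 6 4 (by omega) (by omega) ?_ (Or.inl hA6) (by omega)
          have hsub : S.filter (fun x => x < a + 6) ⊆
              {a + 2, a + 3, a + 4, a + 5} := by
            intro x hx
            rw [Finset.mem_filter] at hx
            have hb := h1 x hx.1
            have e0 : x ≠ a := fun e => h0 (e ▸ hx.1)
            have e1 : x ≠ a + 1 := fun e => hA1 (e ▸ hx.1)
            simp only [Finset.mem_insert, Finset.mem_singleton]
            omega
          refine le_trans (Finset.card_le_card hsub) ?_
          refine le_trans (Finset.card_insert_le _ _) ?_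
          refine le_trans (Nat.add_le_add_right (Finset.card_insert_le _ _) 1) ?_
          refine le_trans (Nat.add_le_add_right
            (Nat.add_le_add_right (Finset.card_insert_le _ _) 1) 1) ?_
          simp
        · -- case I1 : 0011 0 , cut 4
          apply docut 4 2 (by omega) (by have := h1 _ hA3; omega) ?_
            (Or.inl hA4) (by omega)
          have hsub : S.filter (fun x => x < a + 4) ⊆ {a + 2, a + 3} := by
            intro x hx
            rw [Finset.mem_filter] at hx
            have hb := h1 x hx.1
            have e0 : x ≠ a := fun e => h0 (e ▸ hx.1)
            have e1 : x ≠ a + 1 := fun e => hA1 (e ▸ hx.1)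
            simp only [Finset.mem_insert, Finset.mem_singleton]
            omega
          refine le_trans (Finset.card_le_card hsub) ?_
          exact le_trans (Finset.card_insert_le _ _) (by simp)
lemma upper_bound (n : ℕ) (S : Finset (Fin n))
    (h : IsMTDS (SimpleGraph.pathGraph n) S) : S.card ≤ 2 * ((n + 1) / 3) := by
  have hcard : (S.image Fin.val).card = S.card :=
    Finset.card_image_of_injective _ Fin.val_injective
  rw [← hcard]
  apply Hh_card n 0 (S.image Fin.val)
  refine ⟨?_, ?_, ?_⟩
  · intro s hs
    rw [Finset.mem_image] at hs
    obtain ⟨y, _, hy⟩ := hs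
    have := y.isLt
    omega
  · intro v hv1 hv2
    obtain ⟨s, hs, hadj⟩ := h.1 ⟨v, by omega⟩
    rw [SimpleGraph.pathGraph_adj] at hadj
    refine ⟨s.val, Finset.mem_image_of_mem _ hs, ?_⟩
    simp only [adj1]
    rcases hadj with h' | h' <;> simp at h' <;> omega
  · intro s' hs'
    rw [Finset.mem_image] at hs'
    obtain ⟨x, hx, hxval⟩ := hs'
    have hsub : S.erase x ⊂ S := Finset.erase_ssubset hx
    have hnot := h.2 (S.erase x) hsub
    rw [IsTDS] at hnot
    push_neg at hnot
    obtain ⟨v, hv⟩ := hnot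
    have hadjvx : (SimpleGraph.pathGraph n).Adj v x := by
      obtain ⟨t, ht, hadj⟩ := h.1 v
      rcases eq_or_ne t x with rfl | hne
      · exact hadj
      · exact absurd hadj (hv t (Finset.mem_erase.mpr ⟨hne, ht⟩))
    refine ⟨v.val, by omega, by have := v.isLt; omega, ?_, ?_⟩
    · rw [SimpleGraph.pathGraph_adj] at hadjvx
      simp only [adj1]
      omega
    · intro u hu hadju
      rw [Finset.mem_image] at hu
      obtain ⟨y, hy, hyval⟩ := hu
      have hadjvy : (SimpleGraph.pathGraph n).Adj v y := by
        rw [SimpleGraph.pathGraph_adj]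
        simp only [adj1] at hadju
        omega
      rcases eq_or_ne y x with rfl | hne
      · omega
      · exact absurd hadjvy (hv y (Finset.mem_erase.mpr ⟨hne, hy⟩))
def goodPat (n x : ℕ) : Prop := if n % 3 = 2 then x % 3 ≤ 1 else 1 ≤ x % 3

lemma goodPat_iff2 (n : ℕ) (hn3 : n % 3 = 2) (x : ℕ) : goodPat n x ↔ x % 3 ≤ 1 := by
  simp [goodPat, hn3]

lemma goodPat_iff1 (n : ℕ) (hn3 : ¬ n % 3 = 2) (x : ℕ) : goodPat n x ↔ 1 ≤ x % 3 := by
  simp [goodPat, hn3]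

instance goodPat.dec (n x : ℕ) : Decidable (goodPat n x) := by
  unfold goodPat; infer_instance

def extremal (n : ℕ) : Finset (Fin n) :=
  Finset.univ.filter (fun v => goodPat n v.val)

lemma mem_extremal {n : ℕ} (v : Fin n) : v ∈ extremal n ↔ goodPat n v.val := by
  simp [extremal]

lemma extremal_tds (n : ℕ) (hn : 2 ≤ n) :
    IsTDS (SimpleGraph.pathGraph n) (extremal n) := by
  intro v
  have hvlt := v.isLt
  have hkey : ∃ w, w < n ∧ goodPat n w ∧ (v.val + 1 = w ∨ w + 1 = v.val) := by
    by_cases hn3 : n % 3 = 2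
    · simp only [goodPat_iff2 n hn3]
      have : v.val % 3 = 0 ∨ v.val % 3 = 1 ∨ v.val % 3 = 2 := by omega
      rcases this with h' | h' | h'
      · exact ⟨v.val + 1, by omega, by omega, by omega⟩
      · exact ⟨v.val - 1, by omega, by omega, by omega⟩
      · exact ⟨v.val + 1, by omega, by omega, by omega⟩
    · simp only [goodPat_iff1 n hn3]
      have : v.val = 0 ∨ (0 < v.val ∧ v.val % 3 = 0) ∨ v.val % 3 = 1 ∨ v.val % 3 = 2 := by
        omega
      rcases this with h' | h' | h' | h'
      · exact ⟨1, by omega, by omega, by omega⟩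
      · exact ⟨v.val - 1, by omega, by omega, by omega⟩
      · exact ⟨v.val + 1, by omega, by omega, by omega⟩
      · exact ⟨v.val - 1, by omega, by omega, by omega⟩
  obtain ⟨w, hw1, hw2, hw3⟩ := hkey
  refine ⟨⟨w, hw1⟩, (mem_extremal _).mpr hw2, ?_⟩
  rw [SimpleGraph.pathGraph_adj]
  simpa using hw3

lemma extremal_private (n : ℕ) (hn : 2 ≤ n) (s : Fin n) (hs : s ∈ extremal n) :
    ∃ v : Fin n, ∀ u ∈ extremal n, (SimpleGraph.pathGraph n).Adj v u → u = s := by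
  rw [mem_extremal] at hs
  have hslt := s.isLt
  -- choose the private neighbor w with its defining property
  have hkey : ∃ w, w < n ∧ (∀ y, y < n → goodPat n y →
      (y + 1 = w ∨ w + 1 = y) → y = s.val) := by
    by_cases hn3 : n % 3 = 2
    · simp only [goodPat_iff2 n hn3] at hs ⊢
      have : s.val % 3 = 0 ∨ s.val % 3 = 1 := by omega
      rcases this with h' | h'
      · -- private neighbor is s+1 ; its nbrs are s and s+2 (≡2)
        refine ⟨s.val + 1, by omega, ?_⟩
        intro y hy hyp hadj
        omega
      · refine ⟨s.val - 1, by omega, ?_⟩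
        intro y hy hyp hadj
        omega
    · simp only [goodPat_iff1 n hn3] at hs ⊢
      have : s.val % 3 = 1 ∨ s.val % 3 = 2 := by omega
      rcases this with h' | h'
      · refine ⟨s.val + 1, by omega, ?_⟩
        intro y hy hyp hadj
        omega
      · refine ⟨s.val - 1, by omega, ?_⟩
        intro y hy hyp hadj
        omega
  obtain ⟨w, hw1, hw2⟩ := hkey
  refine ⟨⟨w, hw1⟩, ?_⟩
  intro u hu hadj
  rw [mem_extremal] at hu
  rw [SimpleGraph.pathGraph_adj] at hadj
  have hval : ((⟨w, hw1⟩ : Fin n) : ℕ) = w := rfl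
  have hor : u.val + 1 = w ∨ w + 1 = u.val := by omega
  exact Fin.ext (hw2 u.val u.isLt hu hor)

lemma extremal_mtds (n : ℕ) (hn : 2 ≤ n) :
    IsMTDS (SimpleGraph.pathGraph n) (extremal n) := by
  refine ⟨extremal_tds n hn, ?_⟩
  intro T hT hTds
  obtain ⟨s, hsS, hsT⟩ := Finset.exists_of_ssubset hT
  obtain ⟨v, hv⟩ := extremal_private n hn s hsS
  obtain ⟨t, htT, hadj⟩ := hTds v
  have htS : t ∈ extremal n := hT.1 htT
  have := hv t htS hadj
  exact hsT (this ▸ htT)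

lemma count_range_mod1 (n : ℕ) :
    ((Finset.range n).filter (fun x => 1 ≤ x % 3)).card = n - (n + 2) / 3 := by
  induction n with
  | zero => simp
  | succ n ih =>
    rw [Finset.range_add_one, Finset.filter_insert]
    by_cases h : 1 ≤ n % 3
    · rw [if_pos h, Finset.card_insert_of_notMem (by simp)]
      omega
    · rw [if_neg h]
      omega

lemma count_range_mod2 (n : ℕ) :
    ((Finset.range n).filter (fun x => x % 3 ≤ 1)).card = n - n / 3 := by
  induction n with
  | zero => simp
  | succ n ih =>
    rw [Finset.range_add_one, Finset.filter_insert]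
    by_cases h : n % 3 ≤ 1
    · rw [if_pos h, Finset.card_insert_of_notMem (by simp)]
      omega
    · rw [if_neg h]
      omega

lemma card_filter_fin (n : ℕ) (p : ℕ → Prop) [DecidablePred p] :
    (Finset.univ.filter (fun v : Fin n => p v.val)).card
      = ((Finset.range n).filter p).card := by
  have himg : (Finset.univ.filter (fun v : Fin n => p v.val)).image Fin.val
      = (Finset.range n).filter p := by
    ext x
    simp only [Finset.mem_image, Finset.mem_filter, Finset.mem_univ, true_and,
      Finset.mem_range]
    constructor
    · rintro ⟨v, hv, rfl⟩
      exact ⟨v.isLt, hv⟩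
    · rintro ⟨hx, hpx⟩
      exact ⟨⟨x, hx⟩, hpx, rfl⟩
  rw [← himg, Finset.card_image_of_injective _ Fin.val_injective]

lemma extremal_card (n : ℕ) (hn : 2 ≤ n) :
    (extremal n).card = 2 * ((n + 1) / 3) := by
  unfold extremal
  by_cases hn3 : n % 3 = 2
  · have hp : ∀ v : Fin n, goodPat n v.val ↔ v.val % 3 ≤ 1 := by
      intro v; simp [goodPat, hn3]
    rw [Finset.filter_congr (fun v _ => by rw [hp v])]
    rw [card_filter_fin n (fun x => x % 3 ≤ 1), count_range_mod2]
    omega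
  · have hp : ∀ v : Fin n, goodPat n v.val ↔ 1 ≤ v.val % 3 := by
      intro v; simp [goodPat, hn3]
    rw [Finset.filter_congr (fun v _ => by rw [hp v])]
    rw [card_filter_fin n (fun x => 1 ≤ x % 3), count_range_mod1]
    omega

theorem stmt_14 (n : ℕ) (hn : 2 ≤ n) :
    GammaT (SimpleGraph.pathGraph n) = 2 * ((n + 1) / 3) := by
  unfold GammaT
  apply le_antisymm
  · apply csSup_le
    · exact ⟨(extremal n).card, extremal n, extremal_mtds n hn, rfl⟩
    · rintro k ⟨S, hS, rfl⟩
      exact upper_bound n S hS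
  · apply le_csSup
    · refine ⟨Fintype.card (Fin n), ?_⟩
      rintro k ⟨S, hS, rfl⟩
      exact Finset.card_le_univ S
    · exact ⟨extremal n, extremal_mtds n hn, extremal_card n hn⟩
end

section
/- For any n ≥ 3, the upper total domination number of the cycle C_n equals 2⌊n/3⌋ if n ≡ 2 (mod 6), and ⌊2n/3⌋ otherwise. -/
open Finset



variable {V : Type*} [Fintype V] [DecidableEq V]

open Fin.CommRing

lemma GammaT_eq_of {G : SimpleGraph V} {k : ℕ}
    (h1 : ∃ S : Finset V, IsMTDS G S ∧ S.card = k)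
    (h2 : ∀ S : Finset V, IsMTDS G S → S.card ≤ k) : GammaT G = k := by
  have hk : k ∈ {k | ∃ S : Finset V, IsMTDS G S ∧ S.card = k} := h1
  refine le_antisymm (csSup_le ⟨k, hk⟩ ?_) (le_csSup ⟨k, ?_⟩ hk)
  · rintro x ⟨S, hS, rfl⟩; exact h2 S hS
  · rintro x ⟨S, hS, rfl⟩; exact h2 S hS

namespace CycleAux

-- We work with n = m + 3.
variable {m : ℕ}

local notation "N" => m + 3

lemma adj_iff (u v : Fin N) :
    (SimpleGraph.cycleGraph N).Adj u v ↔ v = u - 1 ∨ v = u + 1 := by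
  rw [SimpleGraph.cycleGraph_adj (n := m+1)]
  constructor
  · rintro (h | h)
    · left; rw [← h]; ring
    · right; rw [← h]; ring
  · rintro (rfl | rfl)
    · left; ring
    · right; ring

lemma adj_left (v : Fin N) : (SimpleGraph.cycleGraph N).Adj v (v - 1) := by
  rw [adj_iff]; left; rfl

lemma adj_right (v : Fin N) : (SimpleGraph.cycleGraph N).Adj v (v + 1) := by
  rw [adj_iff]; right; rfl

lemma two_ne_zero' : (2 : Fin N) ≠ 0 := by
  intro h
  have := congrArg Fin.val h
  simp at this
  rw [Nat.mod_eq_of_lt (by omega)] at this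
  omega

/-- From a minimal TDS, extract the local conditions. -/
lemma hD_of {S : Finset (Fin N)} (h : IsMTDS (SimpleGraph.cycleGraph N) S) :
    ∀ v : Fin N, v - 1 ∈ S ∨ v + 1 ∈ S := by
  intro v
  obtain ⟨s, hs, hadj⟩ := h.1 v
  rcases (adj_iff v s).1 hadj with rfl | rfl
  · exact Or.inl hs
  · exact Or.inr hs

lemma hF_of {S : Finset (Fin N)} (h : IsMTDS (SimpleGraph.cycleGraph N) S) :
    ∀ s ∈ S, s + 2 ∉ S ∨ s - 2 ∉ S := by
  intro s hs
  have hsub : S.erase s ⊂ S := Finset.erase_ssubset hs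
  have hnot := h.2 _ hsub
  rw [IsTDS] at hnot
  push_neg at hnot
  obtain ⟨v, hv⟩ := hnot
  -- v's neighbors are v-1 and v+1
  have h1 : v - 1 ∉ S ∨ v - 1 = s := by
    by_cases hc : v - 1 = s
    · exact Or.inr hc
    · left; intro hmem
      exact hv _ (Finset.mem_erase.2 ⟨hc, hmem⟩) (adj_left v)
  have h2 : v + 1 ∉ S ∨ v + 1 = s := by
    by_cases hc : v + 1 = s
    · exact Or.inr hc
    · left; intro hmem
      exact hv _ (Finset.mem_erase.2 ⟨hc, hmem⟩) (adj_right v)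
  have hTDS := hD_of h v
  rcases h1 with h1 | h1
  · rcases h2 with h2 | h2
    · exact absurd hTDS (by tauto)
    · -- v + 1 = s, so s - 2 = v - 1... s - 2 = v + 1 - 2 = v - 1
      right; rw [← h2]; convert h1 using 2; ring
  · rcases h2 with h2 | h2
    · -- v - 1 = s : s + 2 = v + 1
      left; rw [← h1]; convert h2 using 2; ring
    · -- v - 1 = s and v + 1 = s: then 2 = 0, contradiction
      exfalso
      have : v + 1 = v - 1 := h2.trans h1.symm
      have : (2 : Fin N) = 0 := by
        have := sub_eq_zero.2 this
        calc (2:Fin N) = (v+1) - (v-1) := by ring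
        _ = 0 := this
      exact two_ne_zero' this

/-- Converse: the local conditions imply minimal TDS. -/
lemma isMTDS_of {S : Finset (Fin N)}
    (hD : ∀ v : Fin N, v - 1 ∈ S ∨ v + 1 ∈ S)
    (hF : ∀ s ∈ S, s + 2 ∉ S ∨ s - 2 ∉ S) :
    IsMTDS (SimpleGraph.cycleGraph N) S := by
  constructor
  · intro v
    rcases hD v with h | h
    · exact ⟨v - 1, h, adj_left v⟩
    · exact ⟨v + 1, h, adj_right v⟩
  · intro T hT hTDS
    obtain ⟨s, hsS, hsT⟩ := Finset.exists_of_ssubset hT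
    have hTS : T ⊆ S := hT.1
    rcases hF s hsS with h | h
    · obtain ⟨u, huT, hadj⟩ := hTDS (s + 1)
      rcases (adj_iff _ u).1 hadj with rfl | rfl
      · rw [show s + 1 - 1 = s by ring] at huT; exact hsT huT
      · rw [show s + 1 + 1 = s + 2 by ring] at huT; exact h (hTS huT)
    · obtain ⟨u, huT, hadj⟩ := hTDS (s - 1)
      rcases (adj_iff _ u).1 hadj with rfl | rfl
      · rw [show s - 1 - 1 = s - 2 by ring] at huT; exact h (hTS huT)
      · rw [show s - 1 + 1 = s by ring] at huT; exact hsT huT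

end CycleAux
namespace CycleAux
variable {m : ℕ}

open Classical in
noncomputable def cnt (m : ℕ) (p : Fin (m+3) → Prop) : ℕ := (univ.filter p).card

open Classical in
lemma cnt_congr {p q : Fin (m+3) → Prop} (h : ∀ i, p i ↔ q i) : cnt m p = cnt m q := by
  unfold cnt
  congr 1
  apply Finset.filter_congr
  intro i _
  exact h i

open Classical in
lemma cnt_split (p q : Fin (m+3) → Prop) :
    cnt m p = cnt m (fun i => p i ∧ q i) + cnt m (fun i => p i ∧ ¬ q i) := by
  classical
  unfold cnt
  have h := Finset.card_filter_add_card_filter_not (s := univ.filter p) (p := q)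
  rw [Finset.filter_filter, Finset.filter_filter] at h
  rw [← h]
  congr! 1 <;>
    exact congrArg Finset.card
      (@Finset.filter_congr _ _ _ _ (Classical.decPred _) _ (fun x _ => Iff.rfl))

open Classical in
lemma cnt_shift (p : Fin (m+3) → Prop) (c : Fin (m+3)) :
    cnt m (fun i => p (i + c)) = cnt m p := by
  unfold cnt
  apply Finset.card_bij' (fun a _ => a + c) (fun b _ => b - c)
  · intro a ha; simp only [Finset.mem_filter, Finset.mem_univ, true_and] at ha ⊢; exact ha
  · intro b hb; simp only [Finset.mem_filter, Finset.mem_univ, true_and] at hb ⊢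
    rwa [sub_add_cancel]
  · intro a _; rw [add_sub_cancel_right]
  · intro b _; rw [sub_add_cancel]

open Classical in
lemma cnt_zero {p : Fin (m+3) → Prop} (h : ∀ i, ¬ p i) : cnt m p = 0 := by
  unfold cnt
  rw [Finset.card_eq_zero, Finset.filter_eq_empty_iff]
  intro i _
  exact h i

open Classical in
lemma cnt_pos {p : Fin (m+3) → Prop} (h : cnt m p ≠ 0) : ∃ i, p i := by
  unfold cnt at h
  have h2 : (univ.filter p).Nonempty := Finset.card_pos.mp (by omega)
  obtain ⟨i, hi⟩ := h2
  exact ⟨i, (Finset.mem_filter.1 hi).2⟩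

open Classical in
lemma cnt_le {p q : Fin (m+3) → Prop} (c : Fin (m+3)) (h : ∀ i, p i → q (i + c)) :
    cnt m p ≤ cnt m q := by
  unfold cnt
  apply Finset.card_le_card_of_injOn (fun i => i + c)
  · intro a ha
    simp only [Finset.mem_coe, Finset.mem_filter, Finset.mem_univ, true_and] at ha ⊢
    exact h a ha
  · intro a _ b _ hab
    exact add_right_cancel hab

open Classical in
lemma cnt_surj {p q : Fin (m+3) → Prop} (c : Fin (m+3)) (h : ∀ i, p i → q (i + c))
    (hc : cnt m q ≤ cnt m p) : ∀ j, q j → p (j - c) := by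
  classical
  intro j hj
  have hsub : (univ.filter p).image (fun i => i + c) ⊆ univ.filter q := by
    intro x hx
    simp only [Finset.mem_image, Finset.mem_filter, Finset.mem_univ, true_and] at hx ⊢
    obtain ⟨i, hi, rfl⟩ := hx
    exact h i hi
  have hcardim : ((univ.filter p).image (fun i => i + c)).card = (univ.filter p).card := by
    apply Finset.card_image_of_injective
    intro a b hab
    exact add_right_cancel hab
  have heq : (univ.filter p).image (fun i => i + c) = univ.filter q := by
    apply Finset.eq_of_subset_of_card_le hsub
    unfold cnt at hc
    omega
  have hjmem : j ∈ (univ.filter p).image (fun i => i + c) := by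
    rw [heq]; simp only [Finset.mem_filter, Finset.mem_univ, true_and]; exact hj
  simp only [Finset.mem_image, Finset.mem_filter, Finset.mem_univ, true_and] at hjmem
  obtain ⟨i, hi, hic⟩ := hjmem
  rwa [show j - c = i by rw [← hic]; ring]

open Classical in
lemma cnt_total : cnt m (fun _ => True) = m + 3 := by
  unfold cnt
  simp

end CycleAux
namespace CycleAux
variable {m : ℕ}

section Upper
variable {S : Finset (Fin (m+3))}

lemma helper1 (hF : ∀ s ∈ S, s + 2 ∉ S ∨ s - 2 ∉ S) {s1 s2 : Fin (m+3)}
    (h1 : s1 ∈ S) (ha : s2 - 1 ∈ S) (hb : s2 + 1 ∈ S)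
    (heq : s1 + 1 = s2 - 2) : False := by
  rcases hF _ ha with h | h
  · exact h (by rwa [show s2 - 1 + 2 = s2 + 1 by ring])
  · apply h
    rwa [show s2 - 1 - 2 = (s2 - 2) - 1 by ring, ← heq, show s1 + 1 - 1 = s1 by ring]

lemma helper2 (hF : ∀ s ∈ S, s + 2 ∉ S ∨ s - 2 ∉ S) {s1 s2 : Fin (m+3)}
    (h1 : s1 ∈ S) (ha : s2 + 1 ∈ S) (hb : s2 - 1 ∈ S)
    (heq : s1 - 1 = s2 + 2) : False := by
  rcases hF _ ha with h | h
  · apply h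
    rwa [show s2 + 1 + 2 = (s2 + 2) + 1 by ring, ← heq, show s1 - 1 + 1 = s1 by ring]
  · exact h (by rwa [show s2 + 1 - 2 = s2 - 1 by ring])

lemma three_card_le
    (hF : ∀ s ∈ S, s + 2 ∉ S ∨ s - 2 ∉ S) :
    3 * S.card ≤ 2 * (m + 3) := by
  classical
  set f : Fin (m+3) → Fin (m+3) × Bool := fun s =>
    if s + 1 ∈ S then
      (if s - 1 ∈ S then (if s + 2 ∈ S then (s - 2, true) else (s + 2, false))
       else (s - 1, false))
    else (s + 1, true) with hf
  have hchar : ∀ s ∈ S,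
      (f s = (s + 1, true) ∧ s + 1 ∉ S) ∨
      (f s = (s - 1, false) ∧ s + 1 ∈ S ∧ s - 1 ∉ S) ∨
      (f s = (s + 2, false) ∧ s + 1 ∈ S ∧ s - 1 ∈ S ∧ s + 2 ∉ S) ∨
      (f s = (s - 2, true) ∧ s + 1 ∈ S ∧ s - 1 ∈ S ∧ s + 2 ∈ S ∧ s - 2 ∉ S) := by
    intro s hs
    simp only [hf]
    split_ifs with c1 c2 c3
    · rcases hF s hs with h | h
      · exact absurd c3 h
      · exact Or.inr (Or.inr (Or.inr ⟨rfl, c1, c2, c3, h⟩))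
    · exact Or.inr (Or.inr (Or.inl ⟨rfl, c1, c2, c3⟩))
    · exact Or.inr (Or.inl ⟨rfl, c1, c2⟩)
    · exact Or.inl ⟨rfl, c1⟩
  have hmaps : ∀ s ∈ S, f s ∈ ((univ \ S) ×ˢ (univ : Finset Bool)) := by
    intro s hs
    rcases hchar s hs with ⟨he, hc⟩ | ⟨he, -, hc⟩ | ⟨he, -, -, hc⟩ | ⟨he, -, -, -, hc⟩ <;>
      rw [he] <;>
      simp only [Finset.mem_product, Finset.mem_sdiff, Finset.mem_univ, true_and, and_true] <;>
      exact hc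
  have hinj : Set.InjOn f S := by
    intro s1 hs1 s2 hs2 heq
    simp only [Finset.mem_coe] at hs1 hs2
    rcases hchar s1 hs1 with ⟨e1, p1⟩ | ⟨e1, p1, q1⟩ | ⟨e1, p1, q1, r1⟩ | ⟨e1, p1, q1, r1, t1⟩ <;>
      rcases hchar s2 hs2 with ⟨e2, p2⟩ | ⟨e2, p2, q2⟩ | ⟨e2, p2, q2, r2⟩ | ⟨e2, p2, q2, r2, t2⟩ <;>
      rw [e1, e2] at heq <;>
      simp only [Prod.mk.injEq, Bool.true_eq_false, Bool.false_eq_true, and_true, and_false,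
        false_and, and_true] at heq
    -- remaining cases: (1,1) (1,4) (2,2) (2,3) (3,2) (3,3) (4,1) (4,4)
    · exact add_right_cancel heq
    · exact absurd (helper1 hF hs1 q2 p2 heq) not_false
    · exact sub_left_inj.mp heq
    · exact absurd (helper2 hF hs1 p2 q2 heq) not_false
    · exact absurd (helper2 hF hs2 p1 q1 heq.symm) not_false
    · exact add_right_cancel heq
    · exact absurd (helper1 hF hs2 q1 p1 heq.symm) not_false
    · exact sub_left_inj.mp heq
  have hcard := Finset.card_le_card_of_injOn f hmaps hinj
  have h2 : ((univ \ S) ×ˢ (univ : Finset Bool)).card = ((m+3) - S.card) * 2 := by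
    rw [Finset.card_product]
    simp [Finset.card_univ, Finset.card_sdiff_of_subset (Finset.subset_univ S)]
  have hle : S.card ≤ m + 3 := by
    simpa using Finset.card_le_card (Finset.subset_univ S)
  omega

end Upper
end CycleAux
namespace CycleAux
variable {m : ℕ}



set_option maxHeartbeats 1000000 in
lemma crux {S : Finset (Fin (m+3))}
    (hD : ∀ v : Fin (m+3), v - 1 ∈ S ∨ v + 1 ∈ S)
    (hF : ∀ s ∈ S, s + 2 ∉ S ∨ s - 2 ∉ S)
    (hmod : (m + 3) % 6 = 2)
    (hslack : 3 * S.card = 2 * (m + 3) - 1) : False := by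
  classical
  -- convenient forms
  have hD' : ∀ i : Fin (m+3), i ∈ S ∨ i + 2 ∈ S := by
    intro i
    rcases hD (i + 1) with h | h
    · left; rwa [show i + 1 - 1 = i by ring] at h
    · right; rwa [show i + 1 + 1 = i + 2 by ring] at h
  -- counts
  set n1 := cnt m (fun i => i ∈ S) with hn1
  set t := cnt m (fun i => i ∉ S ∧ i + 1 ∈ S) with ht
  set n11 := cnt m (fun i => i ∈ S ∧ i + 1 ∈ S) with hn11
  set n111 := cnt m (fun i => i ∈ S ∧ i + 1 ∈ S ∧ i + 2 ∈ S) with hn111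
  set n011 := cnt m (fun i => i ∉ S ∧ i + 1 ∈ S ∧ i + 2 ∈ S) with hn011
  set n0111 := cnt m (fun i => i ∉ S ∧ i + 1 ∈ S ∧ i + 2 ∈ S ∧ i + 3 ∈ S) with hn0111
  set a2 := cnt m (fun i => i ∉ S ∧ i + 1 ∈ S ∧ i + 2 ∈ S ∧ i + 3 ∉ S) with ha2
  set c := cnt m (fun i => i ∉ S ∧ i + 1 ∈ S ∧ i + 2 ∈ S ∧ i + 3 ∈ S ∧ i + 4 ∉ S) with hc
  set n01111 := cnt m (fun i => i ∉ S ∧ i + 1 ∈ S ∧ i + 2 ∈ S ∧ i + 3 ∈ S ∧ i + 4 ∈ S) with hn01111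
  set d := cnt m (fun i => i ∉ S ∧ i + 1 ∈ S ∧ i + 2 ∈ S ∧ i + 3 ∈ S ∧ i + 4 ∈ S ∧ i + 5 ∉ S)
    with hd
  set n1111 := cnt m (fun i => i ∈ S ∧ i + 1 ∈ S ∧ i + 2 ∈ S ∧ i + 3 ∈ S) with hn1111
  set n0 := cnt m (fun i => i ∉ S) with hn0
  set n00 := cnt m (fun i => i ∉ S ∧ i + 1 ∉ S) with hn00
  set n100 := cnt m (fun i => i ∈ S ∧ i + 1 ∉ S ∧ i + 2 ∉ S) with hn100
  set g2 := cnt m (fun i => i ∈ S ∧ i + 1 ∉ S ∧ i + 2 ∉ S ∧ i + 3 ∈ S) with hg2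
  -- card S = n1
  have hcardS : S.card = n1 := by
    rw [hn1]; unfold cnt
    congr 1
    ext i
    simp
  -- n1 = n11 + t
  have i1 : n1 = n11 + cnt m (fun i => i ∈ S ∧ ¬ (i + 1 ∈ S)) := cnt_split _ _
  have i2 : cnt m (fun i => (i + 1) ∈ S) = n1 := cnt_shift (fun i => i ∈ S) 1
  have i3 : cnt m (fun i => (i + 1) ∈ S) =
      cnt m (fun i => (i + 1) ∈ S ∧ i ∈ S) + cnt m (fun i => (i + 1) ∈ S ∧ ¬ (i ∈ S)) :=
    cnt_split _ _
  have i4 : cnt m (fun i => (i + 1) ∈ S ∧ i ∈ S) = n11 := cnt_congr (fun i => by tauto)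
  have i5 : cnt m (fun i => (i + 1) ∈ S ∧ ¬ (i ∈ S)) = t := cnt_congr (fun i => by tauto)
  have key1 : n1 = n11 + t := by omega
  -- n11 = n111 + n011
  have j1 : cnt m (fun i => (i + 1) ∈ S ∧ (i + 1) + 1 ∈ S) = n11 :=
    cnt_shift (fun i => i ∈ S ∧ i + 1 ∈ S) 1
  have j2 : cnt m (fun i => (i + 1) ∈ S ∧ (i + 1) + 1 ∈ S) =
      cnt m (fun i => ((i + 1) ∈ S ∧ (i + 1) + 1 ∈ S) ∧ i ∈ S) +
      cnt m (fun i => ((i + 1) ∈ S ∧ (i + 1) + 1 ∈ S) ∧ ¬ (i ∈ S)) := cnt_split _ _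
  have j3 : cnt m (fun i => ((i + 1) ∈ S ∧ (i + 1) + 1 ∈ S) ∧ i ∈ S) = n111 :=
    cnt_congr (fun i => by rw [show i + 1 + 1 = i + 2 by ring]; tauto)
  have j4 : cnt m (fun i => ((i + 1) ∈ S ∧ (i + 1) + 1 ∈ S) ∧ ¬ (i ∈ S)) = n011 :=
    cnt_congr (fun i => by rw [show i + 1 + 1 = i + 2 by ring]; tauto)
  have key2 : n11 = n111 + n011 := by omega
  -- n011 = n0111 + a2
  have k1 : n011 = n0111 + a2 := by
    have e1 : n011 = cnt m (fun i => (i ∉ S ∧ i + 1 ∈ S ∧ i + 2 ∈ S) ∧ i + 3 ∈ S) +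
        cnt m (fun i => (i ∉ S ∧ i + 1 ∈ S ∧ i + 2 ∈ S) ∧ ¬ (i + 3 ∈ S)) := cnt_split _ _
    have e2 : cnt m (fun i => (i ∉ S ∧ i + 1 ∈ S ∧ i + 2 ∈ S) ∧ i + 3 ∈ S) = n0111 :=
      cnt_congr (fun i => by tauto)
    have e3 : cnt m (fun i => (i ∉ S ∧ i + 1 ∈ S ∧ i + 2 ∈ S) ∧ ¬ (i + 3 ∈ S)) = a2 :=
      cnt_congr (fun i => by tauto)
    omega
  -- n0111 = n01111 + c
  have k2 : n0111 = n01111 + c := by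
    have e1 : n0111 = cnt m (fun i => (i ∉ S ∧ i + 1 ∈ S ∧ i + 2 ∈ S ∧ i + 3 ∈ S) ∧ i + 4 ∈ S) +
        cnt m (fun i => (i ∉ S ∧ i + 1 ∈ S ∧ i + 2 ∈ S ∧ i + 3 ∈ S) ∧ ¬ (i + 4 ∈ S)) :=
      cnt_split _ _
    have e2 : cnt m (fun i => (i ∉ S ∧ i + 1 ∈ S ∧ i + 2 ∈ S ∧ i + 3 ∈ S) ∧ i + 4 ∈ S) = n01111 :=
      cnt_congr (fun i => by tauto)
    have e3 : cnt m (fun i => (i ∉ S ∧ i + 1 ∈ S ∧ i + 2 ∈ S ∧ i + 3 ∈ S) ∧ ¬ (i + 4 ∈ S)) = c :=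
      cnt_congr (fun i => by tauto)
    omega
  -- n01111 = d
  have k3 : n01111 = d := by
    have e1 : n01111 =
        cnt m (fun i => (i ∉ S ∧ i + 1 ∈ S ∧ i + 2 ∈ S ∧ i + 3 ∈ S ∧ i + 4 ∈ S) ∧ i + 5 ∈ S) +
        cnt m (fun i => (i ∉ S ∧ i + 1 ∈ S ∧ i + 2 ∈ S ∧ i + 3 ∈ S ∧ i + 4 ∈ S) ∧ ¬ (i + 5 ∈ S)) :=
      cnt_split _ _
    have e2 : cnt m
        (fun i => (i ∉ S ∧ i + 1 ∈ S ∧ i + 2 ∈ S ∧ i + 3 ∈ S ∧ i + 4 ∈ S) ∧ i + 5 ∈ S) = 0 := by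
      apply cnt_zero
      rintro i ⟨⟨-, h1, -, h3, -⟩, h5⟩
      rcases hF (i + 3) h3 with h | h
      · rw [show i + 3 + 2 = i + 5 by ring] at h; exact h h5
      · rw [show i + 3 - 2 = i + 1 by ring] at h; exact h h1
    have e3 : cnt m
        (fun i => (i ∉ S ∧ i + 1 ∈ S ∧ i + 2 ∈ S ∧ i + 3 ∈ S ∧ i + 4 ∈ S) ∧ ¬ (i + 5 ∈ S)) = d :=
      cnt_congr (fun i => by tauto)
    omega
  -- n111 = n1111 + n0111
  have k4 : n111 = n1111 + n0111 := by
    have e1 : cnt m (fun i => (i + 1) ∈ S ∧ (i + 1) + 1 ∈ S ∧ (i + 1) + 2 ∈ S) = n111 :=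
      cnt_shift (fun i => i ∈ S ∧ i + 1 ∈ S ∧ i + 2 ∈ S) 1
    have e2 : cnt m (fun i => (i + 1) ∈ S ∧ (i + 1) + 1 ∈ S ∧ (i + 1) + 2 ∈ S) =
        cnt m (fun i => ((i + 1) ∈ S ∧ (i + 1) + 1 ∈ S ∧ (i + 1) + 2 ∈ S) ∧ i ∈ S) +
        cnt m (fun i => ((i + 1) ∈ S ∧ (i + 1) + 1 ∈ S ∧ (i + 1) + 2 ∈ S) ∧ ¬ (i ∈ S)) :=
      cnt_split _ _
    have e3 : cnt m (fun i => ((i + 1) ∈ S ∧ (i + 1) + 1 ∈ S ∧ (i + 1) + 2 ∈ S) ∧ i ∈ S) =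
        n1111 :=
      cnt_congr (fun i => by
        rw [show i + 1 + 1 = i + 2 by ring, show i + 1 + 2 = i + 3 by ring]; tauto)
    have e4 : cnt m (fun i => ((i + 1) ∈ S ∧ (i + 1) + 1 ∈ S ∧ (i + 1) + 2 ∈ S) ∧ ¬ (i ∈ S)) =
        n0111 :=
      cnt_congr (fun i => by
        rw [show i + 1 + 1 = i + 2 by ring, show i + 1 + 2 = i + 3 by ring]; tauto)
    omega
  -- n1111 = n01111
  have k5 : n1111 = n01111 := by
    have e1 : cnt m (fun i => (i+1) ∈ S ∧ (i+1) + 1 ∈ S ∧ (i+1) + 2 ∈ S ∧ (i+1) + 3 ∈ S) = n1111 :=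
      cnt_shift (fun i => i ∈ S ∧ i + 1 ∈ S ∧ i + 2 ∈ S ∧ i + 3 ∈ S) 1
    have e2 : cnt m (fun i => (i+1) ∈ S ∧ (i+1) + 1 ∈ S ∧ (i+1) + 2 ∈ S ∧ (i+1) + 3 ∈ S) =
        cnt m (fun i => ((i+1) ∈ S ∧ (i+1) + 1 ∈ S ∧ (i+1) + 2 ∈ S ∧ (i+1) + 3 ∈ S) ∧ i ∈ S) +
        cnt m (fun i => ((i+1) ∈ S ∧ (i+1) + 1 ∈ S ∧ (i+1) + 2 ∈ S ∧ (i+1) + 3 ∈ S) ∧ ¬ (i ∈ S)) :=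
      cnt_split _ _
    have e3 : cnt m
        (fun i => ((i+1) ∈ S ∧ (i+1) + 1 ∈ S ∧ (i+1) + 2 ∈ S ∧ (i+1) + 3 ∈ S) ∧ i ∈ S) = 0 := by
      apply cnt_zero
      rintro i ⟨⟨-, h2, h3, h4⟩, h0⟩
      rw [show i + 1 + 1 = i + 2 by ring] at h2
      rw [show i + 1 + 2 = i + 3 by ring] at h3
      rw [show i + 1 + 3 = i + 4 by ring] at h4
      rcases hF (i + 2) h2 with h | h
      · rw [show i + 2 + 2 = i + 4 by ring] at h; exact h h4
      · rw [show i + 2 - 2 = i by ring] at h; exact h h0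
    have e4 : cnt m
        (fun i => ((i+1) ∈ S ∧ (i+1) + 1 ∈ S ∧ (i+1) + 2 ∈ S ∧ (i+1) + 3 ∈ S) ∧ ¬ (i ∈ S)) =
        n01111 :=
      cnt_congr (fun i => by
        rw [show i + 1 + 1 = i + 2 by ring, show i + 1 + 2 = i + 3 by ring,
          show i + 1 + 3 = i + 4 by ring]; tauto)
    omega
  -- t = n011
  have k6 : t = n011 := by
    have e1 : t = cnt m (fun i => (i ∉ S ∧ i + 1 ∈ S) ∧ i + 2 ∈ S) +
        cnt m (fun i => (i ∉ S ∧ i + 1 ∈ S) ∧ ¬ (i + 2 ∈ S)) := cnt_split _ _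
    have e2 : cnt m (fun i => (i ∉ S ∧ i + 1 ∈ S) ∧ i + 2 ∈ S) = n011 :=
      cnt_congr (fun i => by tauto)
    have e3 : cnt m (fun i => (i ∉ S ∧ i + 1 ∈ S) ∧ ¬ (i + 2 ∈ S)) = 0 := by
      apply cnt_zero
      rintro i ⟨⟨h0, -⟩, h2⟩
      rcases hD' i with h | h
      · exact h0 h
      · exact h2 h
    omega
  -- n0 and the total
  have k7 : (m + 3) = n1 + n0 := by
    have e1 : cnt m (fun _ : Fin (m+3) => True) =
        cnt m (fun i => True ∧ i ∈ S) + cnt m (fun i => True ∧ ¬ (i ∈ S)) := cnt_split _ _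
    have e2 : cnt m (fun i : Fin (m+3) => True ∧ i ∈ S) = n1 := cnt_congr (fun i => by tauto)
    have e3 : cnt m (fun i : Fin (m+3) => True ∧ ¬ (i ∈ S)) = n0 := cnt_congr (fun i => by tauto)
    have e4 := cnt_total (m := m)
    omega
  -- n0 = t + n00
  have k8 : n0 = t + n00 := by
    have e1 : n0 = cnt m (fun i => i ∉ S ∧ i + 1 ∈ S) +
        cnt m (fun i => i ∉ S ∧ ¬ (i + 1 ∈ S)) := cnt_split _ _
    have e2 : cnt m (fun i => i ∉ S ∧ ¬ (i + 1 ∈ S)) = n00 := cnt_congr (fun i => by tauto)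
    omega
  -- n00 = n100
  have k9 : n00 = n100 := by
    have e1 : cnt m (fun i => (i + 1) ∉ S ∧ (i + 1) + 1 ∉ S) = n00 :=
      cnt_shift (fun i => i ∉ S ∧ i + 1 ∉ S) 1
    have e2 : cnt m (fun i => (i + 1) ∉ S ∧ (i + 1) + 1 ∉ S) =
        cnt m (fun i => ((i + 1) ∉ S ∧ (i + 1) + 1 ∉ S) ∧ i ∈ S) +
        cnt m (fun i => ((i + 1) ∉ S ∧ (i + 1) + 1 ∉ S) ∧ ¬ (i ∈ S)) := cnt_split _ _
    have e3 : cnt m (fun i => ((i + 1) ∉ S ∧ (i + 1) + 1 ∉ S) ∧ i ∈ S) = n100 :=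
      cnt_congr (fun i => by rw [show i + 1 + 1 = i + 2 by ring]; tauto)
    have e4 : cnt m (fun i => ((i + 1) ∉ S ∧ (i + 1) + 1 ∉ S) ∧ ¬ (i ∈ S)) = 0 := by
      apply cnt_zero
      rintro i ⟨⟨-, h2⟩, h0⟩
      rw [show i + 1 + 1 = i + 2 by ring] at h2
      rcases hD' i with h | h
      · exact h0 h
      · exact h2 h
    omega
  -- n100 = g2
  have k10 : n100 = g2 := by
    have e1 : n100 = cnt m (fun i => (i ∈ S ∧ i + 1 ∉ S ∧ i + 2 ∉ S) ∧ i + 3 ∈ S) +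
        cnt m (fun i => (i ∈ S ∧ i + 1 ∉ S ∧ i + 2 ∉ S) ∧ ¬ (i + 3 ∈ S)) := cnt_split _ _
    have e2 : cnt m (fun i => (i ∈ S ∧ i + 1 ∉ S ∧ i + 2 ∉ S) ∧ i + 3 ∈ S) = g2 :=
      cnt_congr (fun i => by tauto)
    have e3 : cnt m (fun i => (i ∈ S ∧ i + 1 ∉ S ∧ i + 2 ∉ S) ∧ ¬ (i + 3 ∈ S)) = 0 := by
      apply cnt_zero
      rintro i ⟨⟨-, h1, -⟩, h3⟩
      rcases hD' (i + 1) with h | h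
      · exact h1 h
      · rw [show i + 1 + 2 = i + 3 by ring] at h; exact h3 h
    omega
  -- the injection 0111 → 1001
  have hmap : ∀ i : Fin (m+3), (i ∉ S ∧ i + 1 ∈ S ∧ i + 2 ∈ S ∧ i + 3 ∈ S) →
      (fun j => j ∈ S ∧ j + 1 ∉ S ∧ j + 2 ∉ S ∧ j + 3 ∈ S) (i + (-2)) := by
    rintro i ⟨h0, h1, h2, h3⟩
    rw [show i + (-2) = i - 2 by ring]
    have hm2 : i - 2 ∈ S := by
      rcases hD (i - 1) with h | h
      · rwa [show i - 1 - 1 = i - 2 by ring] at h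
      · rw [show i - 1 + 1 = i by ring] at h; exact absurd h h0
    have hm1 : i - 1 ∉ S := by
      rcases hF (i + 1) h1 with h | h
      · rw [show i + 1 + 2 = i + 3 by ring] at h; exact absurd h3 h
      · rwa [show i + 1 - 2 = i - 1 by ring] at h
    refine ⟨hm2, ?_, ?_, ?_⟩
    · rwa [show i - 2 + 1 = i - 1 by ring]
    · rwa [show i - 2 + 2 = i by ring]
    · rwa [show i - 2 + 3 = i + 1 by ring]
  have hle : n0111 ≤ g2 := cnt_le (-2) hmap
  -- main arithmetic: c = 1, g2 = c + d
  have harith : c = 1 ∧ g2 = c + d := by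
    have h1 : n1 = 2 * t + c + 2 * d := by omega
    have h2 : n0111 = c + d := by omega
    omega
  obtain ⟨hc1, hg2cd⟩ := harith
  -- surjectivity: every 1001 is followed by two more members
  have hsurj := cnt_surj
    (p := fun i => i ∉ S ∧ i + 1 ∈ S ∧ i + 2 ∈ S ∧ i + 3 ∈ S)
    (q := fun j => j ∈ S ∧ j + 1 ∉ S ∧ j + 2 ∉ S ∧ j + 3 ∈ S)
    (-2) hmap (by omega)
  have fact1 : ∀ j : Fin (m+3), j ∈ S → j + 1 ∉ S → j + 2 ∉ S → j + 3 ∈ S →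
      (j + 4 ∈ S ∧ j + 5 ∈ S) := by
    intro j hj h1 h2 h3
    have := hsurj j ⟨hj, h1, h2, h3⟩
    rw [show j - (-2) = j + 2 by ring] at this
    obtain ⟨-, -, hb, hcc⟩ := this
    constructor
    · rwa [show j + 4 = j + 2 + 2 by ring]
    · rwa [show j + 5 = j + 2 + 3 by ring]
  -- the Heavy predicate
  set Heavy : Fin (m+3) → Prop := fun i =>
    (i ∈ S ∧ ((i + 1 ∈ S ∧ i + 2 ∈ S) ∨ (i - 1 ∈ S ∧ i + 1 ∈ S) ∨ (i - 2 ∈ S ∧ i - 1 ∈ S))) ∨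
    (i ∉ S ∧ (i + 1 ∉ S ∨ i - 1 ∉ S)) with hHeavy
  have step : ∀ i : Fin (m+3), Heavy i → Heavy (i + 1) := by
    intro i hi
    have e1 : i + 1 - 1 = i := by ring
    have e2 : i + 1 + 1 = i + 2 := by ring
    have e3 : i + 1 - 2 = i - 1 := by ring
    have e4 : i + 1 + 2 = i + 3 := by ring
    rcases hi with ⟨hiS, hcl⟩ | ⟨hiN, hcl⟩
    · by_cases h1 : i + 1 ∈ S
      · left
        refine ⟨h1, ?_⟩
        rw [e1, e2, e3, e4]
        rcases hcl with ⟨a, b⟩ | ⟨a, b⟩ | ⟨a, b⟩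
        · exact Or.inr (Or.inl ⟨hiS, b⟩)
        · exact Or.inr (Or.inr ⟨a, hiS⟩)
        · exact Or.inr (Or.inr ⟨b, hiS⟩)
      · rcases hcl with ⟨a, b⟩ | ⟨a, b⟩ | ⟨a, b⟩
        · exact absurd a h1
        · exact absurd b h1
        · right
          have h2 : i + 2 ∉ S := by
            rcases hF i hiS with h | h
            · exact h
            · exact absurd a h
          refine ⟨h1, ?_⟩
          rw [e2]
          exact Or.inl h2
    · by_cases h1 : i + 1 ∈ S
      · rcases hcl with h0 | h0
        · exact absurd h1 h0
        · have hm2 : i - 2 ∈ S := by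
            rcases hD (i - 1) with h | h
            · rwa [show i - 1 - 1 = i - 2 by ring] at h
            · rw [show i - 1 + 1 = i by ring] at h; exact absurd h hiN
          have hf := fact1 (i - 2) hm2 (by rwa [show i - 2 + 1 = i - 1 by ring])
            (by rwa [show i - 2 + 2 = i by ring]) (by rwa [show i - 2 + 3 = i + 1 by ring])
          left
          refine ⟨h1, Or.inl ⟨?_, ?_⟩⟩
          · rw [e2, show i + 2 = i - 2 + 4 by ring]; exact hf.1
          · rw [e4, show i + 3 = i - 2 + 5 by ring]; exact hf.2
      · right
        refine ⟨h1, ?_⟩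
        rw [e1]
        exact Or.inr hiN
  -- Heavy holds somewhere
  have hex : ∃ i0 : Fin (m+3), Heavy i0 := by
    have : c ≠ 0 := by omega
    obtain ⟨i, h0, h1, h2, h3, h4⟩ := cnt_pos (p :=
      fun i => i ∉ S ∧ i + 1 ∈ S ∧ i + 2 ∈ S ∧ i + 3 ∈ S ∧ i + 4 ∉ S) (by rw [← hc]; exact this)
    refine ⟨i + 1, Or.inl ⟨h1, Or.inl ⟨?_, ?_⟩⟩⟩
    · rwa [show i + 1 + 1 = i + 2 by ring]
    · rwa [show i + 1 + 2 = i + 3 by ring]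
  -- Heavy holds everywhere
  have hall : ∀ j : Fin (m+3), Heavy j := by
    obtain ⟨i0, hi0⟩ := hex
    have hk : ∀ k : ℕ, Heavy (i0 + (k : Fin (m+3))) := by
      intro k
      induction k with
      | zero => simpa using hi0
      | succ k ih =>
        have e : ((k + 1 : ℕ) : Fin (m+3)) = (k : Fin (m+3)) + 1 := by push_cast; ring
        rw [e, ← add_assoc]
        exact step _ ih
    intro j
    have := hk (j - i0).val
    rwa [Fin.cast_val_eq_self, show i0 + (j - i0) = j by ring] at this
  -- a2 = 0
  have ha2zero : a2 = 0 := by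
    rw [ha2]
    apply cnt_zero
    rintro i ⟨h0, h1, h2, h3⟩
    rcases hall (i + 1) with ⟨-, hcl⟩ | ⟨hN, -⟩
    · rcases hcl with ⟨a, b⟩ | ⟨a, b⟩ | ⟨a, b⟩
      · rw [show i + 1 + 2 = i + 3 by ring] at b; exact h3 b
      · rw [show i + 1 - 1 = i by ring] at a; exact h0 a
      · rw [show i + 1 - 1 = i by ring] at b; exact h0 b
    · exact hN h1
  -- final contradiction
  omega

end CycleAux
namespace CycleAux

lemma mod1 {N k : ℕ} (hk : k < N) : (k + 1) % N = if k + 1 = N then 0 else k + 1 := by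
  split_ifs with h
  · rw [h, Nat.mod_self]
  · exact Nat.mod_eq_of_lt (by omega)

lemma mod2 {N k : ℕ} (hk : k < N) (h2 : 2 ≤ N) :
    (k + 2) % N = if k + 2 = N then 0 else if k + 1 = N then 1 else k + 2 := by
  split_ifs with h h'
  · rw [h, Nat.mod_self]
  · have e : k + 2 = N + 1 := by omega
    rw [e, Nat.add_mod_left, Nat.mod_eq_of_lt (by omega)]
  · exact Nat.mod_eq_of_lt (by omega)

lemma mods1 {N k : ℕ} (hk : k < N) : (N - 1 + k) % N = if k = 0 then N - 1 else k - 1 := by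
  split_ifs with h
  · subst h
    exact Nat.mod_eq_of_lt (by omega)
  · have e : N - 1 + k = N + (k - 1) := by omega
    rw [e, Nat.add_mod_left, Nat.mod_eq_of_lt (by omega)]

lemma mods2 {N k : ℕ} (hk : k < N) (h2 : 2 ≤ N) :
    (N - 2 + k) % N = if k = 0 then N - 2 else if k = 1 then N - 1 else k - 2 := by
  split_ifs with h h'
  · subst h
    exact Nat.mod_eq_of_lt (by omega)
  · subst h'
    have e : N - 2 + 1 = N - 1 := by omega
    rw [e]
    exact Nat.mod_eq_of_lt (by omega)
  · have e : N - 2 + k = N + (k - 2) := by omega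
    rw [e, Nat.add_mod_left, Nat.mod_eq_of_lt (by omega)]

variable {m : ℕ}

lemma val_add_one (v : Fin (m+3)) : (v + 1).val = (v.val + 1) % (m+3) := rfl
lemma val_add_two (v : Fin (m+3)) : (v + 2).val = (v.val + 2) % (m+3) := rfl
lemma val_sub_one (v : Fin (m+3)) : (v - 1).val = ((m+3) - 1 + v.val) % (m+3) := rfl
lemma val_sub_two (v : Fin (m+3)) : (v - 2).val = ((m+3) - 2 + v.val) % (m+3) := rfl

lemma card_filter_val (P : ℕ → Prop) [DecidablePred P] :
    ((univ : Finset (Fin (m+3))).filter (fun i => P i.val)).card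
      = ((range (m+3)).filter P).card := by
  rw [← Finset.card_image_of_injective (univ.filter (fun i : Fin (m+3) => P i.val))
    Fin.val_injective]
  congr 1
  ext b
  simp only [Finset.mem_image, Finset.mem_filter, Finset.mem_univ, true_and, Finset.mem_range]
  constructor
  · rintro ⟨a, hPa, rfl⟩; exact ⟨a.isLt, hPa⟩
  · rintro ⟨hb, hPb⟩; exact ⟨⟨b, hb⟩, hPb, rfl⟩

lemma filter_range_succ_card (p : ℕ → Prop) [DecidablePred p] (n : ℕ) :
    ((range (n+1)).filter p).card = ((range n).filter p).card + (if p n then 1 else 0) := by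
  rw [Finset.range_add_one, Finset.filter_insert]
  split_ifs with h
  · rw [Finset.card_insert_of_notMem (by simp)]
  · simp

lemma card_filter_range_add (p : ℕ → Prop) [DecidablePred p] (a b : ℕ) :
    ((range (a+b)).filter p).card
      = ((range a).filter p).card + ((range b).filter (fun k => p (a + k))).card := by
  induction b with
  | zero => simp
  | succ b ih =>
    rw [show a + (b+1) = (a+b)+1 by ring, filter_range_succ_card, ih, filter_range_succ_card]
    omega

lemma L3 (q : ℕ) : ((range (3*q)).filter (fun k => k % 3 < 2)).card = 2 * q := by
  induction q with
  | zero => simp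
  | succ q ih =>
    rw [show 3*(q+1) = (3*q + 1) + 1 + 1 by ring,
      filter_range_succ_card, filter_range_succ_card, filter_range_succ_card, ih,
      if_pos (by omega), if_pos (by omega), if_neg (by omega)]
    ring

lemma L6 (q : ℕ) : ((range (6*q)).filter (fun k => k % 6 < 4)).card = 4 * q := by
  induction q with
  | zero => simp
  | succ q ih =>
    rw [show 6*(q+1) = 6*q + 1 + 1 + 1 + 1 + 1 + 1 by ring,
      filter_range_succ_card, filter_range_succ_card, filter_range_succ_card,
      filter_range_succ_card, filter_range_succ_card, filter_range_succ_card, ih,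
      if_pos (by omega), if_pos (by omega), if_pos (by omega), if_pos (by omega),
      if_neg (by omega), if_neg (by omega)]
    ring

end CycleAux
namespace CycleAux
variable {m : ℕ}


lemma constr1 (h3 : (m+3) % 3 = 0) : ∃ S : Finset (Fin (m+3)),
    (∀ v, v - 1 ∈ S ∨ v + 1 ∈ S) ∧ (∀ s ∈ S, s + 2 ∉ S ∨ s - 2 ∉ S) ∧
    S.card = 2 * ((m+3) / 3) := by
  refine ⟨univ.filter (fun i => i.val % 3 < 2), ?_, ?_, ?_⟩
  · intro v
    have hk : v.val < m + 3 := v.isLt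
    simp only [Finset.mem_filter, Finset.mem_univ, true_and, val_sub_one, val_add_one]
    rw [mods1 hk, mod1 hk]
    split_ifs <;> omega
  · intro s hs
    simp only [Finset.mem_filter, Finset.mem_univ, true_and] at hs
    have hk : s.val < m + 3 := s.isLt
    simp only [Finset.mem_filter, Finset.mem_univ, true_and, not_and, val_sub_two, val_add_two]
    rw [mods2 hk (by omega), mod2 hk (by omega)]
    split_ifs <;> omega
  · rw [card_filter_val (fun k => k % 3 < 2)]
    have e : m + 3 = 3 * ((m+3)/3) := by omega
    rw [e, L3]
    omega

end CycleAux

namespace CycleAux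
variable {m : ℕ}

lemma constr2 (h3 : (m+3) % 3 = 1) : ∃ S : Finset (Fin (m+3)),
    (∀ v, v - 1 ∈ S ∨ v + 1 ∈ S) ∧ (∀ s ∈ S, s + 2 ∉ S ∨ s - 2 ∉ S) ∧
    S.card = 2 * ((m+3) / 3) := by
  refine ⟨univ.filter (fun i => i.val % 3 < 2 ∧ i.val ≠ m + 2), ?_, ?_, ?_⟩
  · intro v
    have hk : v.val < m + 3 := v.isLt
    simp only [Finset.mem_filter, Finset.mem_univ, true_and, val_sub_one, val_add_one]
    rw [mods1 hk, mod1 hk]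
    split_ifs <;> omega
  · intro s hs
    simp only [Finset.mem_filter, Finset.mem_univ, true_and] at hs
    have hk : s.val < m + 3 := s.isLt
    simp only [Finset.mem_filter, Finset.mem_univ, true_and, not_and, val_sub_two, val_add_two]
    rw [mods2 hk (by omega), mod2 hk (by omega)]
    split_ifs <;> omega
  · rw [card_filter_val (fun k => k % 3 < 2 ∧ k ≠ m + 2)]
    have e : m + 3 = 3 * ((m+3)/3) + 1 := by omega
    rw [e, filter_range_succ_card, if_neg (by omega)]
    have e2 : (range (3 * ((m+3)/3))).filter (fun k => k % 3 < 2 ∧ k ≠ m + 2)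
        = (range (3 * ((m+3)/3))).filter (fun k => k % 3 < 2) := by
      apply Finset.filter_congr
      intro k hk
      simp only [Finset.mem_range] at hk
      constructor
      · intro h; exact h.1
      · intro h; exact ⟨h, by omega⟩
    rw [e2, L3]
    omega

lemma constr3 (h6 : (m+3) % 6 = 2) : ∃ S : Finset (Fin (m+3)),
    (∀ v, v - 1 ∈ S ∨ v + 1 ∈ S) ∧ (∀ s ∈ S, s + 2 ∉ S ∨ s - 2 ∉ S) ∧
    S.card = 2 * ((m+3) / 3) := by
  refine ⟨univ.filter (fun i => (i.val < 8 ∧ i.val % 4 < 2) ∨ (8 ≤ i.val ∧ (i.val - 8) % 3 < 2)),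
    ?_, ?_, ?_⟩
  · intro v
    have hk : v.val < m + 3 := v.isLt
    simp only [Finset.mem_filter, Finset.mem_univ, true_and, val_sub_one, val_add_one]
    rw [mods1 hk, mod1 hk]
    split_ifs <;> omega
  · intro s hs
    simp only [Finset.mem_filter, Finset.mem_univ, true_and] at hs
    have hk : s.val < m + 3 := s.isLt
    simp only [Finset.mem_filter, Finset.mem_univ, true_and, not_and, not_or, not_le,
      val_sub_two, val_add_two]
    rw [mods2 hk (by omega), mod2 hk (by omega)]
    split_ifs <;> omega
  · rw [card_filter_val (fun k => (k < 8 ∧ k % 4 < 2) ∨ (8 ≤ k ∧ (k - 8) % 3 < 2))]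
    have e : m + 3 = 8 + (m + 3 - 8) := by omega
    rw [e, card_filter_range_add]
    have e1 : ((range 8).filter
        (fun k => (k < 8 ∧ k % 4 < 2) ∨ (8 ≤ k ∧ (k - 8) % 3 < 2))).card = 4 := by decide
    have e2 : (range (m + 3 - 8)).filter
          (fun k => (8 + k < 8 ∧ (8 + k) % 4 < 2) ∨ (8 ≤ 8 + k ∧ (8 + k - 8) % 3 < 2))
        = (range (m + 3 - 8)).filter (fun k => k % 3 < 2) := by
      apply Finset.filter_congr
      intro k hk
      constructor
      · intro h; omega
      · intro h; omega
    rw [e1, e2]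
    have e3 : m + 3 - 8 = 3 * ((m + 3 - 8) / 3) := by omega
    rw [e3, L3]
    omega

lemma constr4 (h6 : (m+3) % 6 = 5) : ∃ S : Finset (Fin (m+3)),
    (∀ v, v - 1 ∈ S ∨ v + 1 ∈ S) ∧ (∀ s ∈ S, s + 2 ∉ S ∨ s - 2 ∉ S) ∧
    S.card = 4 * ((m+3) / 6) + 3 := by
  refine ⟨univ.filter (fun i => i.val < 3 ∨ (5 ≤ i.val ∧ (i.val - 5) % 6 < 4)), ?_, ?_, ?_⟩
  · intro v
    have hk : v.val < m + 3 := v.isLt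
    simp only [Finset.mem_filter, Finset.mem_univ, true_and, val_sub_one, val_add_one]
    rw [mods1 hk, mod1 hk]
    split_ifs <;> omega
  · intro s hs
    simp only [Finset.mem_filter, Finset.mem_univ, true_and] at hs
    have hk : s.val < m + 3 := s.isLt
    simp only [Finset.mem_filter, Finset.mem_univ, true_and, not_or, not_le, not_and,
      val_sub_two, val_add_two]
    rw [mods2 hk (by omega), mod2 hk (by omega)]
    split_ifs <;> omega
  · rw [card_filter_val (fun k => k < 3 ∨ (5 ≤ k ∧ (k - 5) % 6 < 4))]
    have e : m + 3 = 5 + (m + 3 - 5) := by omega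
    rw [e, card_filter_range_add]
    have e1 : ((range 5).filter (fun k => k < 3 ∨ (5 ≤ k ∧ (k - 5) % 6 < 4))).card = 3 := by
      decide
    have e2 : (range (m + 3 - 5)).filter
          (fun k => 5 + k < 3 ∨ (5 ≤ 5 + k ∧ (5 + k - 5) % 6 < 4))
        = (range (m + 3 - 5)).filter (fun k => k % 6 < 4) := by
      apply Finset.filter_congr
      intro k hk
      constructor
      · intro h; omega
      · intro h; omega
    rw [e1, e2]
    have e3 : m + 3 - 5 = 6 * ((m + 3 - 5) / 6) := by omega
    rw [e3, L6]
    omega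

end CycleAux

theorem stmt_15 (n : ℕ) (hn : 3 ≤ n) :
    GammaT (SimpleGraph.cycleGraph n) =
      (if n % 6 = 2 then 2 * (n / 3) else 2 * n / 3) := by
  obtain ⟨m, rfl⟩ : ∃ m, n = m + 3 := ⟨n - 3, by omega⟩
  apply GammaT_eq_of
  · -- existence of a minimal TDS of the right size
    by_cases h2 : (m + 3) % 6 = 2
    · rw [if_pos h2]
      obtain ⟨S, hDS, hFS, hcard⟩ := CycleAux.constr3 h2
      exact ⟨S, CycleAux.isMTDS_of hDS hFS, by omega⟩
    · rw [if_neg h2]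
      have h3 := Nat.mod_lt (m+3) (show 0 < 3 by omega)
      interval_cases h : (m + 3) % 3
      · obtain ⟨S, hDS, hFS, hcard⟩ := CycleAux.constr1 h
        exact ⟨S, CycleAux.isMTDS_of hDS hFS, by omega⟩
      · obtain ⟨S, hDS, hFS, hcard⟩ := CycleAux.constr2 h
        exact ⟨S, CycleAux.isMTDS_of hDS hFS, by omega⟩
      · have h5 : (m + 3) % 6 = 5 := by omega
        obtain ⟨S, hDS, hFS, hcard⟩ := CycleAux.constr4 h5
        exact ⟨S, CycleAux.isMTDS_of hDS hFS, by omega⟩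
  · -- upper bound
    intro S hS
    have hD := CycleAux.hD_of hS
    have hF := CycleAux.hF_of hS
    have hup := CycleAux.three_card_le hF
    by_cases h2 : (m + 3) % 6 = 2
    · rw [if_pos h2]
      have hne : 3 * S.card ≠ 2 * (m + 3) - 1 := fun hq => CycleAux.crux hD hF h2 hq
      omega
    · rw [if_neg h2]
      omega
end

section
/- For every integer n ≥ 3, Γ_t(C_n) ≤ Γ_t(P_n). -/
open Finset

variable {V : Type*} [Fintype V] [DecidableEq V]

open SimpleGraph

open Fin.CommRing

/-- Path adjacency implies cycle adjacency. -/
lemma aux_path_le_cycle {m : ℕ} {u v : Fin (m+3)} (h : (pathGraph (m+3)).Adj u v) :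
    (cycleGraph (m+3)).Adj u v := by
  rw [pathGraph_adj] at h
  rw [cycleGraph_adj]
  rcases h with h | h
  · right
    have hv : v = u + 1 := by
      have hu : u ≠ Fin.last (m+2) := by
        intro hu
        have := v.isLt
        simp [hu, Fin.last] at h
        omega
      apply Fin.ext
      rw [Fin.val_add_one, if_neg hu]
      exact h.symm
    rw [hv]; ring
  · left
    have hv : u = v + 1 := by
      have hu : v ≠ Fin.last (m+2) := by
        intro hu
        have := u.isLt
        simp [hu, Fin.last] at h
        omega
      apply Fin.ext
      rw [Fin.val_add_one, if_neg hu]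
      exact h.symm
    rw [hv]; ring

/-- Cycle adjacency which avoids the edge {last, 0} gives path adjacency. -/
lemma aux_cycle_to_path {m : ℕ} {u v : Fin (m+3)} (h : (cycleGraph (m+3)).Adj u v)
    (h1 : ¬(u = Fin.last (m+2) ∧ v = 0)) (h2 : ¬(v = Fin.last (m+2) ∧ u = 0)) :
    (pathGraph (m+3)).Adj u v := by
  rw [cycleGraph_adj] at h
  rw [pathGraph_adj]
  rcases h with h | h
  · -- u - v = 1, so u = v + 1
    have hv : u = v + 1 := by rw [← h]; ring
    right
    by_cases hl : v = Fin.last (m+2)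
    · exfalso
      apply h2
      refine ⟨hl, ?_⟩
      rw [hv, hl]
      apply Fin.ext
      rw [Fin.val_add_one, if_pos rfl]; rfl
    · rw [hv, Fin.val_add_one, if_neg hl]
  · have hv : v = u + 1 := by rw [← h]; ring
    left
    by_cases hl : u = Fin.last (m+2)
    · exfalso
      apply h1
      refine ⟨hl, ?_⟩
      rw [hv, hl]
      apply Fin.ext
      rw [Fin.val_add_one, if_pos rfl]; rfl
    · rw [hv, Fin.val_add_one, if_neg hl]

/-- Cycle adjacency is translation invariant. -/
lemma aux_cycle_trans {m : ℕ} {u v : Fin (m+3)} (c : Fin (m+3))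
    (h : (cycleGraph (m+3)).Adj u v) : (cycleGraph (m+3)).Adj (u - c) (v - c) := by
  rw [cycleGraph_adj] at *
  simpa using h

/-- Existence of a minimal TDS given a TDS. -/
lemma aux_exists_mtds (G : SimpleGraph V) (S : Finset V) (hS : IsTDS G S) :
    ∃ T : Finset V, IsMTDS G T := by
  obtain ⟨T, hT, hmin⟩ := Finset.isWellFounded_ssubset.wf.has_min {S : Finset V | IsTDS G S} ⟨S, hS⟩
  exact ⟨T, hT, fun U hU hUT => hmin U hUT hU⟩

lemma aux_two_ne_zero (m : ℕ) : (2 : Fin (m+3)) ≠ 0 := by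
  intro h
  have := congrArg Fin.val h
  rw [Fin.val_zero, Fin.val_two] at this
  exact two_ne_zero this

lemma aux_one_ne_zero (m : ℕ) : (1 : Fin (m+3)) ≠ 0 := by
  intro h
  have := congrArg Fin.val h
  rw [Fin.val_zero, Fin.val_one] at this
  exact one_ne_zero this

lemma aux_last_ne_zero (m : ℕ) : (Fin.last (m+2) : Fin (m+3)) ≠ 0 := by
  intro h
  have := congrArg Fin.val h
  rw [Fin.val_zero, Fin.val_last] at this
  omega

lemma aux_one_ne_last (m : ℕ) : (1 : Fin (m+3)) ≠ Fin.last (m+2) := by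
  intro h
  have := congrArg Fin.val h
  rw [Fin.val_one, Fin.val_last] at this
  omega

lemma aux_univ_tds (m : ℕ) : IsTDS (cycleGraph (m+3)) Finset.univ := by
  intro v
  refine ⟨v + 1, Finset.mem_univ _, ?_⟩
  rw [cycleGraph_adj]
  right; ring

lemma aux_main (m : ℕ) (S : Finset (Fin (m+3))) (hS : IsMTDS (cycleGraph (m+3)) S) :
    ∃ S' : Finset (Fin (m+3)), IsMTDS (pathGraph (m+3)) S' ∧ S'.card = S.card := by
  obtain ⟨hTDS, hmin⟩ := hS
  -- S is not the whole vertex set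
  have hne : S ≠ Finset.univ := by
    intro hSu
    refine hmin (Finset.univ.erase 0) ?_ ?_
    · rw [hSu]; exact Finset.erase_ssubset (Finset.mem_univ 0)
    · intro x
      by_cases hx : x + 1 = 0
      · refine ⟨x - 1, ?_, ?_⟩
        · rw [Finset.mem_erase]
          refine ⟨?_, Finset.mem_univ _⟩
          intro h0
          apply aux_two_ne_zero m
          have : x = 1 := by rw [sub_eq_zero] at h0; exact h0
          rw [this] at hx
          calc (2 : Fin (m+3)) = 1 + 1 := by ring
          _ = 0 := hx
        · rw [cycleGraph_adj]; left; ring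
      · refine ⟨x + 1, ?_, ?_⟩
        · rw [Finset.mem_erase]
          exact ⟨hx, Finset.mem_univ _⟩
        · rw [cycleGraph_adj]; right; ring
  obtain ⟨v, hv⟩ : ∃ v, v ∉ S := by
    by_contra h
    push_neg at h
    exact hne (Finset.eq_univ_iff_forall.2 h)
  obtain ⟨w, hwS, hadj⟩ := hTDS v
  rw [cycleGraph_adj] at hadj
  -- choose the cut point c: the removed edge is {c - 1, c}, mapped to {last, 0}
  have key : ∃ c : Fin (m+3), ∀ x : Fin (m+3), ∃ s ∈ S, (cycleGraph (m+3)).Adj x s ∧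
      ¬(x - c = Fin.last (m+2) ∧ s - c = 0) ∧ ¬(s - c = Fin.last (m+2) ∧ x - c = 0) := by
    rcases hadj with h | h
    · -- v - w = 1, i.e. v = w + 1 : remove edge {v, v+1}, c = v + 1
      refine ⟨v + 1, fun x => ?_⟩
      obtain ⟨s, hsS, hadj'⟩ := hTDS x
      have hsv : s ≠ v := fun h' => hv (h' ▸ hsS)
      by_cases hxv : x - (v+1) = Fin.last (m+2) ∧ s - (v+1) = 0
      · -- x = v and s = v + 1 : use w = v - 1 instead
        have hwv : w = v - 1 := by rw [eq_sub_iff_add_eq, ← sub_eq_iff_eq_add'.1 h]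
        have hxv' : x = v := by
          have hx1 := hxv.1
          rw [sub_eq_iff_eq_add] at hx1
          rw [hx1]
          calc Fin.last (m+2) + (v + 1) = (Fin.last (m+2) + 1) + v := by ring
          _ = 0 + v := by rw [Fin.last_add_one]
          _ = v := zero_add v
        refine ⟨w, hwS, ?_, ?_, ?_⟩
        · rw [cycleGraph_adj, hxv']; left; rw [hwv, sub_sub_cancel]
        · intro ⟨_, h2⟩
          apply aux_two_ne_zero m
          rw [hwv] at h2
          calc (2:Fin (m+3)) = -(v - 1 - (v+1)) := by ring
          _ = -0 := by rw [h2]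
          _ = 0 := neg_zero
        · intro ⟨_, h2⟩
          rw [hxv'] at h2
          apply aux_one_ne_zero m
          calc (1:Fin (m+3)) = -(v - (v+1)) := by ring
          _ = -0 := by rw [h2]
          _ = 0 := neg_zero
      · refine ⟨s, hsS, hadj', hxv, ?_⟩
        intro ⟨h1, _⟩
        apply hsv
        rw [sub_eq_iff_eq_add] at h1
        rw [h1]
        calc Fin.last (m+2) + (v + 1) = (Fin.last (m+2) + 1) + v := by ring
        _ = 0 + v := by rw [Fin.last_add_one]
        _ = v := zero_add v
    · -- w - v = 1, i.e. w = v + 1 : remove edge {v-1, v}, c = v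
      refine ⟨v, fun x => ?_⟩
      obtain ⟨s, hsS, hadj'⟩ := hTDS x
      have hsv : s ≠ v := fun h' => hv (h' ▸ hsS)
      by_cases hxv : x - v = 0 ∧ s - v = Fin.last (m+2)
      · -- x = v and s = v - 1 : use w = v + 1 instead
        have hwv : w = v + 1 := by rw [← sub_eq_iff_eq_add'.1 h]
        have hxv' : x = v := by rw [← sub_eq_zero]; exact hxv.1
        refine ⟨w, hwS, ?_, ?_, ?_⟩
        · rw [cycleGraph_adj, hxv']; right; rw [hwv, add_sub_cancel_left]
        · intro ⟨h1, _⟩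
          rw [hxv'] at h1
          apply aux_last_ne_zero m
          rw [← h1]; rw [sub_self]
        · intro ⟨h1, _⟩
          apply aux_one_ne_last m
          rw [← h1, hwv]; ring
      · refine ⟨s, hsS, hadj', ?_, ?_⟩
        · intro ⟨_, h2⟩
          apply hsv
          rw [sub_eq_zero] at h2; exact h2
        · intro ⟨h1, h2⟩
          exact hxv ⟨h2, h1⟩
  obtain ⟨c, hc⟩ := key
  refine ⟨S.image (· - c), ⟨?_, ?_⟩, Finset.card_image_of_injective S (sub_left_injective)⟩
  · -- TDS for the path
    intro y
    obtain ⟨s, hsS, hadj', hc1, hc2⟩ := hc (y + c)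
    refine ⟨s - c, Finset.mem_image_of_mem _ hsS, ?_⟩
    have := aux_cycle_trans c hadj'
    rw [add_sub_cancel_right] at this hc1 hc2
    exact aux_cycle_to_path this hc1 hc2
  · -- minimality
    intro T hT hTpath
    refine hmin (T.image (· + c)) ?_ ?_
    · have h1 : T.image (· + c) ⊆ S := by
        intro x hx
        rw [Finset.mem_image] at hx
        obtain ⟨t, htT, rfl⟩ := hx
        have := hT.1 htT
        rw [Finset.mem_image] at this
        obtain ⟨s, hsS, hst⟩ := this
        rwa [show s = t + c by rw [← hst]; ring] at hsS
      rw [Finset.ssubset_iff_of_subset h1]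
      obtain ⟨x, hxS, hxT⟩ := Finset.exists_of_ssubset hT
      rw [Finset.mem_image] at hxS
      obtain ⟨s, hsS, rfl⟩ := hxS
      refine ⟨s, hsS, fun hmem => hxT ?_⟩
      rw [Finset.mem_image] at hmem
      obtain ⟨t, htT, hts⟩ := hmem
      have hst : s - c = t := by rw [← hts, add_sub_cancel_right]
      rw [hst]; exact htT
    · intro x
      obtain ⟨t, htT, hadj'⟩ := hTpath (x - c)
      refine ⟨t + c, Finset.mem_image_of_mem _ htT, ?_⟩
      have := aux_cycle_trans (-c) (aux_path_le_cycle hadj')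
      rwa [sub_neg_eq_add, sub_neg_eq_add, sub_add_cancel] at this

theorem stmt_16 (n : ℕ) (hn : 3 ≤ n) :
    GammaT (SimpleGraph.cycleGraph n) ≤ GammaT (SimpleGraph.pathGraph n) := by
  obtain ⟨m, rfl⟩ : ∃ m, n = m + 3 := ⟨n - 3, by omega⟩
  apply csSup_le_csSup
  · refine ⟨m + 3, fun k hk => ?_⟩
    obtain ⟨S, _, rfl⟩ := hk
    calc S.card ≤ (Finset.univ : Finset (Fin (m+3))).card := Finset.card_le_card (Finset.subset_univ S)
    _ = m + 3 := by simp
  · obtain ⟨T, hT⟩ := aux_exists_mtds (cycleGraph (m+3)) Finset.univ (aux_univ_tds m)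
    exact ⟨T.card, T, hT, rfl⟩
  · rintro k ⟨S, hS, rfl⟩
    obtain ⟨S', hS', hcard⟩ := aux_main m S hS
    exact ⟨S', hS', hcard⟩
end
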